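/- arXiv:2504.13559 — 4 statements merged into one kernel-verified Lean document; each statement's English description precedes it below -/
import Mathlib

section
/- Let Ω ⊆ ℝⁿ be a Lebesgue measurable set and φ a convex Φ-function on Ω satisfying (aDec) with exponent q > 1 and constant L_q. Let g, g¹, g², … : Ω → ℝᵐ be measurable with ∫_Ω φ(x,|g(x)|) dx < ∞, and suppose there exist a_k > 0 with a_k → 0 such that ∫_Ω φ(x, |g^k(x) − g(x)|/a_k) dx ≤ 1 for all k. Then limsup_{k→∞} ∫_Ω φ(x,|g^k(x)|) dx ≤ ∫_Ω φ(x,|g(x)|) dx. -/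
/-!
Fix `θ ∈ (0,1)`. Once `a_k ≤ θ`, convexity applied to
`|G_k| ≤ (1-θ)·(|g|/(1-θ)) + θ·(|G_k-g|/θ)`, together with the fact that the perspective
`θ ↦ θ φ(x, d/θ)` is non-increasing (as `φ(x,0) = 0`), gives
`φ(x,|G_k|) ≤ φ(x,|g|/(1-θ)) + a_k φ(x,|G_k-g|/a_k)`. Integrating and using the modular bound,
`limsup_k ∫ φ(x,|G_k|) ≤ ∫ φ(x,|g|/(1-θ))`. As `θ → 0⁺` the right-hand side tends to
`∫ φ(x,|g|)` by dominated convergence: (aDec) gives `φ(x,|g|/(1-θ)) ≤ L_q 2^q φ(x,|g|)` for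
`θ ≤ 1/2`, and `φ(x,·)` is continuous on `(0,∞)` by convexity.
-/

open MeasureTheory Set Filter Topology
open scoped ENNReal NNReal

noncomputable section

/-- Euclidean space `ℝⁿ`. -/
abbrev Eucl (n : ℕ) : Type := EuclideanSpace ℝ (Fin n)

/-- A modulus of continuity: a continuous non-decreasing `ω : [0,∞) → [0,∞)` with `ω 0 = 0`. -/
def IsModulus (ω : ℝ → ℝ) : Prop :=
  ContinuousOn ω (Ici 0) ∧ MonotoneOn ω (Ici 0) ∧ ω 0 = 0 ∧ ∀ r : ℝ, 0 ≤ r → 0 ≤ ω r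

/-- `Ω` has Lipschitz boundary: near each boundary point, after an orthogonal change of
coordinates, `Ω` coincides within a neighbourhood with the open region above the graph of a
Lipschitz function `ℝ^{n-1} → ℝ`. -/
def HasLipschitzBoundary (n : ℕ) (Ω : Set (Eucl n)) : Prop :=
  ∀ x ∈ frontier Ω,
    ∃ (A : Eucl n ≃ₗᵢ[ℝ] WithLp 2 (EuclideanSpace ℝ (Fin (n - 1)) × ℝ))
      (g : EuclideanSpace ℝ (Fin (n - 1)) → ℝ) (L : ℝ≥0) (U : Set (Eucl n)),
      LipschitzWith L g ∧ IsOpen U ∧ x ∈ U ∧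
      Ω ∩ U = {y : Eucl n |
        g ((WithLp.equiv 2 (EuclideanSpace ℝ (Fin (n - 1)) × ℝ) (A y)).1)
          < (WithLp.equiv 2 (EuclideanSpace ℝ (Fin (n - 1)) × ℝ) (A y)).2} ∩ U

/-- `φ` is a continuous convex Φ-function on `Ω`. -/
def IsPhiFunction {n : ℕ} (Ω : Set (Eucl n)) (φ : Eucl n → ℝ → ℝ) : Prop :=
  ContinuousOn (fun p : Eucl n × ℝ => φ p.1 p.2) (Ω ×ˢ Ici (0:ℝ)) ∧
  (∀ x ∈ Ω, ∀ t : ℝ, 0 ≤ t → 0 ≤ φ x t) ∧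
  (∀ x ∈ Ω, MonotoneOn (φ x) (Ici (0:ℝ))) ∧
  (∀ x ∈ Ω, ConvexOn ℝ (Ici (0:ℝ)) (φ x)) ∧
  (∀ x ∈ Ω, φ x 0 = 0) ∧
  (∀ x ∈ Ω, Tendsto (φ x) atTop atTop) ∧
  (∃ L₁ : ℝ, 1 ≤ L₁ ∧ ∀ x ∈ Ω, ∀ s t : ℝ, 0 < s → s ≤ t → φ x s / s ≤ L₁ * (φ x t / t))

/-- Pointwise Legendre–Fenchel conjugate `φ*(x,s) = sup_{t ≥ 0} (s·t − φ(x,t)) ∈ [0,∞]`. -/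
def phiStar {n : ℕ} (φ : Eucl n → ℝ → ℝ) (x : Eucl n) (s : ℝ) : ℝ≥0∞ :=
  ⨆ t : ℝ, ⨆ _ : 0 ≤ t, ENNReal.ofReal (s * t - φ x t)

/-- Divergence of a (differentiable) vector field. -/
def divg {n : ℕ} (ξ : Eucl n → Eucl n) (x : Eucl n) : ℝ :=
  ∑ i : Fin n, fderiv ℝ ξ x (EuclideanSpace.single i 1) i

/-- A `C¹` vector field compactly supported in `Ω`. -/
def TestVF {n : ℕ} (Ω : Set (Eucl n)) (ξ : Eucl n → Eucl n) : Prop :=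
  ContDiff ℝ 1 ξ ∧ HasCompactSupport ξ ∧ tsupport ξ ⊆ Ω

/-- The variable-growth total variation
`TV_φ(v) = sup { ∫_Ω (v·div ξ − φ*(x,|ξ|)) dx : ξ ∈ C¹_c(Ω)ⁿ } ∈ [0,∞]`. -/
def TVphi {n : ℕ} (Ω : Set (Eucl n)) (φ : Eucl n → ℝ → ℝ) (v : Eucl n → ℝ) : ℝ≥0∞ :=
  ⨆ ξ : {ξ : Eucl n → Eucl n // TestVF Ω ξ},
    ENNReal.ofReal (∫ x in Ω, v x * divg ξ.1 x) - ∫⁻ x in Ω, phiStar φ x ‖ξ.1 x‖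

/-- Condition (A0). -/
def CondA0 {n : ℕ} (Ω : Set (Eucl n)) (φ : Eucl n → ℝ → ℝ) : Prop :=
  ∃ β : ℝ, 0 < β ∧ β ≤ 1 ∧ ∀ x ∈ Ω, φ x β ≤ 1 ∧ 1 ≤ φ x (1 / β)

/-- Condition (aDec)_q with constant L_q. -/
def CondADecWith {n : ℕ} (Ω : Set (Eucl n)) (φ : Eucl n → ℝ → ℝ) (q Lq : ℝ) : Prop :=
  1 < q ∧ 1 ≤ Lq ∧ ∀ x ∈ Ω, ∀ s t : ℝ, 0 < s → s ≤ t → φ x t / t ^ q ≤ Lq * (φ x s / s ^ q)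

/-- Condition (aDec). -/
def CondADec {n : ℕ} (Ω : Set (Eucl n)) (φ : Eucl n → ℝ → ℝ) : Prop :=
  ∃ q Lq : ℝ, CondADecWith Ω φ q Lq

/-- The recession function `φ'_∞(x) = lim_{t→∞} φ(x,t)/t ∈ [0,∞]`. -/
def recessionFn {n : ℕ} (φ : Eucl n → ℝ → ℝ) (x : Eucl n) : ℝ≥0∞ :=
  Filter.limsup (fun t : ℝ => ENNReal.ofReal (φ x t / t)) atTop

/-- Condition (A1); the bound `φ(y,t) ≤ K·|x−y|^{−n}` is written multiplicatively. -/
def CondA1 {n : ℕ} (Ω : Set (Eucl n)) (φ : Eucl n → ℝ → ℝ) : Prop :=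
  ∀ K : ℝ, 0 < K → ∃ β : ℝ, 0 < β ∧ β ≤ 1 ∧
    ∀ x ∈ Ω, ∀ y ∈ Ω, ∀ t : ℝ, 0 < t → dist x y ^ n * φ y t ≤ K →
      φ x (β * t) ≤ φ y t + 1

/-- Condition (RVA1). -/
def CondRVA1 {n : ℕ} (Ω : Set (Eucl n)) (φ : Eucl n → ℝ → ℝ) : Prop :=
  CondA1 Ω φ ∧
  ∀ K : ℝ, 0 < K → ∃ ω : ℝ → ℝ, IsModulus ω ∧
    ∀ x ∈ Ω, ∀ y ∈ Ω, (recessionFn φ x < ⊤ ∨ recessionFn φ y < ⊤) →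
      ∀ t : ℝ, 0 < t → dist x y ^ n * φ y t ≤ K →
        φ x (t / (1 + ω (dist x y))) ≤ φ y t + ω (dist x y)

/-- Condition (VA1) for the conjugate function `φ*`. -/
def CondVA1star {n : ℕ} (Ω : Set (Eucl n)) (φ : Eucl n → ℝ → ℝ) : Prop :=
  ∀ K : ℝ, 0 < K → ∃ ω : ℝ → ℝ, IsModulus ω ∧
    ∀ x ∈ Ω, ∀ y ∈ Ω, ∀ s : ℝ, 0 < s →
      ENNReal.ofReal (dist x y ^ n) * phiStar φ y s ≤ ENNReal.ofReal K →
        phiStar φ x (s / (1 + ω (dist x y))) ≤ phiStar φ y s + ENNReal.ofReal (ω (dist x y))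

/-- `ξ` has distributional divergence `w` on `Ω`. -/
def HasDistribDiv {n : ℕ} (Ω : Set (Eucl n)) (ξ : Eucl n → Eucl n) (w : Eucl n → ℝ) : Prop :=
  ∀ ψ : Eucl n → ℝ, ContDiff ℝ (⊤ : ℕ∞) ψ → HasCompactSupport ψ → tsupport ψ ⊆ Ω →
    ∫ x in Ω, fderiv ℝ ψ x (ξ x) = - ∫ x in Ω, w x * ψ x

/-- `ξ` (with distributional divergence `w`) has vanishing normal trace `ν·ξ = 0`. -/
def ZeroNormalTrace {n : ℕ} (Ω : Set (Eucl n)) (ξ : Eucl n → Eucl n) (w : Eucl n → ℝ) : Prop :=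
  ∀ ψ : Eucl n → ℝ, ContDiff ℝ (⊤ : ℕ∞) ψ →
    (∫ x in Ω, fderiv ℝ ψ x (ξ x)) + ∫ x in Ω, w x * ψ x = 0

/-- The subdifferential relation `w ∈ ∂E_φ(v)` on `L²(Ω)`. -/
def InSubdiffTV {n : ℕ} (Ω : Set (Eucl n)) (φ : Eucl n → ℝ → ℝ) (v w : Eucl n → ℝ) : Prop :=
  TVphi Ω φ v < ⊤ ∧
  ∀ u : Eucl n → ℝ, MemLp u 2 (volume.restrict Ω) → TVphi Ω φ u < ⊤ →
    (TVphi Ω φ v).toReal + ∫ x in Ω, w x * (u x - v x) ≤ (TVphi Ω φ u).toReal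

/-- The functional `F̃(w) = inf { ∫_Ω φ*(x,|ξ|) dx : ξ ∈ C¹_c(Ω)ⁿ, div ξ = w }`
(the infimum over the empty set being `∞`). -/
def FTilde {n : ℕ} (Ω : Set (Eucl n)) (φ : Eucl n → ℝ → ℝ) (w : Eucl n → ℝ) : ℝ≥0∞ :=
  ⨅ ξ : {ξ : Eucl n → Eucl n // TestVF Ω ξ ∧ (fun x => divg ξ x) =ᵐ[volume.restrict Ω] w},
    ∫⁻ x in Ω, phiStar φ x ‖ξ.1 x‖

/-- The functional `F(w) = inf { ∫_Ω φ*(x,|ξ|) dx : ξ ∈ L¹(Ω;ℝⁿ), div ξ = w, ν·ξ = 0 }`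
(the infimum over the empty set being `∞`). -/
def Ffun {n : ℕ} (Ω : Set (Eucl n)) (φ : Eucl n → ℝ → ℝ) (w : Eucl n → ℝ) : ℝ≥0∞ :=
  ⨅ ξ : {ξ : Eucl n → Eucl n //
      Integrable ξ (volume.restrict Ω) ∧ HasDistribDiv Ω ξ w ∧ ZeroNormalTrace Ω ξ w},
    ∫⁻ x in Ω, phiStar φ x ‖ξ.1 x‖

/-- Integral of a function against a finite signed measure, via the Jordan decomposition. -/
def sInt {α : Type*} [MeasurableSpace α] (μ : SignedMeasure α) (ψ : α → ℝ) : ℝ :=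
  ∫ x, ψ x ∂μ.toJordanDecomposition.posPart - ∫ x, ψ x ∂μ.toJordanDecomposition.negPart

/-- `μ` is the Anzellotti-type pairing measure `(ξ, Dv)` on `Ω`: it is a finite signed
(Borel, hence Radon) measure concentrated on `Ω` satisfying
`∫ ψ dμ = −∫_Ω ψ·v·(div ξ) − ∫_Ω v·(ξ·∇ψ)` for all test functions `ψ ∈ C_c^∞(Ω)`;
here `w = div ξ`. -/
def PairingMeasure {n : ℕ} (Ω : Set (Eucl n)) (v : Eucl n → ℝ) (ξ : Eucl n → Eucl n)
    (w : Eucl n → ℝ) (μ : SignedMeasure (Eucl n)) : Prop :=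
  (∀ B : Set (Eucl n), MeasurableSet B → μ B = μ (B ∩ Ω)) ∧
  ∀ ψ : Eucl n → ℝ, ContDiff ℝ (⊤ : ℕ∞) ψ → HasCompactSupport ψ → tsupport ψ ⊆ Ω →
    sInt μ ψ = - ∫ x in Ω, ψ x * (v x * w x) - ∫ x in Ω, v x * fderiv ℝ ψ x (ξ x)

/-- The Rudin–Osher–Fatemi functional `ROF_φ(v) = λ·E_φ(v) + ½ ∫_Ω |v − f|² dx ∈ [0,∞]`. -/
def ROFfun {n : ℕ} (Ω : Set (Eucl n)) (φ : Eucl n → ℝ → ℝ) (lam : ℝ) (f v : Eucl n → ℝ) :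
    ℝ≥0∞ :=
  ENNReal.ofReal lam * TVphi Ω φ v + (∫⁻ x in Ω, ENNReal.ofReal ((v x - f x) ^ 2)) / 2

open scoped ENNReal NNReal

theorem MonotoneOn.nonneg_of_map_zero {f : ℝ → ℝ} (hmono : MonotoneOn f (Ici 0)) (h0 : f 0 = 0)
    {s : ℝ} (hs : 0 ≤ s) : 0 ≤ f s :=
  h0 ▸ hmono self_mem_Ici hs hs

namespace ConvexOn

variable {f : ℝ → ℝ}

theorem map_add_le_one_sub_mul_add_mul (hf : ConvexOn ℝ (Ici 0) f) {s d θ : ℝ}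
    (hs : 0 ≤ s) (hd : 0 ≤ d) (hθ₀ : 0 < θ) (hθ₁ : θ < 1) :
    f (s + d) ≤ (1 - θ) * f (s / (1 - θ)) + θ * f (d / θ) := by
  have h1θ : 0 < 1 - θ := sub_pos.2 hθ₁
  have hcomb : (1 - θ) • (s / (1 - θ)) + θ • (d / θ) = s + d := by
    simp only [smul_eq_mul]
    field_simp
  have h := hf.2 (mem_Ici.2 (div_nonneg hs h1θ.le)) (mem_Ici.2 (div_nonneg hd hθ₀.le)) h1θ.le hθ₀.le
      (sub_add_cancel 1 θ)
  rw [hcomb] at h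
  simpa only [smul_eq_mul] using h

theorem mul_map_div_le_mul_map_div (hf : ConvexOn ℝ (Ici 0) f) (h0 : f 0 = 0) {d a θ : ℝ}
    (hd : 0 ≤ d) (ha : 0 < a) (haθ : a ≤ θ) :
    θ * f (d / θ) ≤ a * f (d / a) := by
  have hθ : 0 < θ := ha.trans_le haθ
  have hcomb : (a / θ) • (d / a) + (1 - a / θ) • (0 : ℝ) = d / θ := by
    simp only [smul_eq_mul, mul_zero, add_zero]
    field_simp
  have hconv := hf.2 (mem_Ici.2 (div_nonneg hd ha.le)) (self_mem_Ici (a := (0 : ℝ)))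
    (div_nonneg ha.le hθ.le) (sub_nonneg.2 ((div_le_one hθ).2 haθ)) (add_sub_cancel _ 1)
  rw [hcomb, h0, smul_eq_mul, smul_eq_mul, mul_zero, add_zero] at hconv
  calc θ * f (d / θ) ≤ θ * (a / θ * f (d / a)) := mul_le_mul_of_nonneg_left hconv hθ.le
    _ = a * f (d / a) := by field_simp

theorem map_le_of_le_add (hf : ConvexOn ℝ (Ici 0) f) (hmono : MonotoneOn f (Ici 0))
    (h0 : f 0 = 0) {u s d a θ : ℝ} (hu : 0 ≤ u) (hs : 0 ≤ s) (hd : 0 ≤ d) (hus : u ≤ s + d)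
    (ha : 0 < a) (haθ : a ≤ θ) (hθ : θ < 1) :
    f u ≤ f (s / (1 - θ)) + a * f (d / a) := by
  have hθ₀ : 0 < θ := ha.trans_le haθ
  have hf_nonneg : 0 ≤ f (s / (1 - θ)) :=
    hmono.nonneg_of_map_zero h0 (div_nonneg hs (sub_pos.2 hθ).le)
  calc f u ≤ f (s + d) := hmono (mem_Ici.2 hu) (mem_Ici.2 (add_nonneg hs hd)) hus
    _ ≤ (1 - θ) * f (s / (1 - θ)) + θ * f (d / θ) :=
      hf.map_add_le_one_sub_mul_add_mul hs hd hθ₀ hθ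
    _ ≤ f (s / (1 - θ)) + a * f (d / a) := by
      gcongr ?_ + ?_
      · nlinarith
      · exact hf.mul_map_div_le_mul_map_div h0 hd ha haθ

theorem tendsto_map_div_one_sub (hf : ConvexOn ℝ (Ici 0) f) {s : ℝ} (hs : 0 ≤ s) :
    Tendsto (fun θ => f (s / (1 - θ))) (𝓝 0) (𝓝 (f s)) := by
  rcases hs.eq_or_lt with rfl | hs
  · simp
  have hcont : ContinuousAt f s :=
    hf.continuousOn_interior.continuousAt (by simpa using Ioi_mem_nhds hs)
  refine hcont.tendsto.comp ?_
  have hdiv : ContinuousAt (fun θ : ℝ => s / (1 - θ)) 0 :=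
    continuousAt_const.div (continuousAt_const.sub continuousAt_id) (by norm_num)
  simpa using hdiv.tendsto

end ConvexOn

theorem map_le_mul_rpow_of_aDec {f : ℝ → ℝ} {q L : ℝ}
    (hdec : ∀ s t : ℝ, 0 < s → s ≤ t → f t / t ^ q ≤ L * (f s / s ^ q))
    {s t : ℝ} (hs : 0 < s) (hst : s ≤ t) : f t ≤ L * (t / s) ^ q * f s := by
  have ht : 0 < t := hs.trans_le hst
  have h := hdec s t hs hst
  rw [div_le_iff₀ (Real.rpow_pos_of_pos ht q)] at h
  calc f t ≤ L * (f s / s ^ q) * t ^ q := h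
    _ = L * (t / s) ^ q * f s := by
      rw [Real.div_rpow ht.le hs.le]
      field_simp

theorem map_div_one_sub_le_of_aDec {f : ℝ → ℝ} {q L : ℝ}
    (hdec : ∀ s t : ℝ, 0 < s → s ≤ t → f t / t ^ q ≤ L * (f s / s ^ q))
    (hq : 0 ≤ q) (hL : 0 ≤ L) {s θ : ℝ} (hs : 0 < s) (hfs : 0 ≤ f s) (hθ₀ : 0 ≤ θ)
    (hθ : θ ≤ 1 / 2) : f (s / (1 - θ)) ≤ L * 2 ^ q * f s := by
  have h1θ : 0 < 1 - θ := by linarith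
  have hst : s ≤ s / (1 - θ) := by rw [le_div_iff₀ h1θ]; nlinarith
  have hratio : s / (1 - θ) / s ≤ 2 := by
    rw [div_le_iff₀ hs, div_le_iff₀ h1θ]; nlinarith
  calc f (s / (1 - θ)) ≤ L * (s / (1 - θ) / s) ^ q * f s := map_le_mul_rpow_of_aDec hdec hs hst
    _ ≤ L * 2 ^ q * f s := by gcongr

def phiModular {α : Type*} [MeasurableSpace α] (μ : Measure α) (φ : α → ℝ → ℝ) (f : α → ℝ) :
    ℝ≥0∞ :=
  ∫⁻ x, ENNReal.ofReal (φ x (f x)) ∂μ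

section PhiModular

variable {α E : Type*} [MeasurableSpace α] {μ : Measure α} [NormedAddCommGroup E]
  [MeasurableSpace E] [OpensMeasurableSpace E] {φ : α → ℝ → ℝ}

theorem measurable_phi_norm_div (hmeas : ∀ f : α → ℝ, Measurable f → Measurable fun x => φ x |f x|)
    {g : α → E} (hg : Measurable g) {c : ℝ} (hc : 0 ≤ c) :
    Measurable fun x => φ x (‖g x‖ / c) := by
  simpa only [abs_of_nonneg (div_nonneg (norm_nonneg _) hc)] using
    hmeas (fun x => ‖g x‖ / c) (hg.norm.div_const c)

theorem phiModular_norm_le_add (hmeas : ∀ f : α → ℝ, Measurable f → Measurable fun x => φ x |f x|)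
    (hmono : ∀ᵐ x ∂μ, MonotoneOn (φ x) (Ici 0)) (hconv : ∀ᵐ x ∂μ, ConvexOn ℝ (Ici 0) (φ x))
    (hzero : ∀ᵐ x ∂μ, φ x 0 = 0) {g h : α → E} (hg : Measurable g) {a θ : ℝ} (ha : 0 < a)
    (haθ : a ≤ θ) (hθ : θ < 1) :
    phiModular μ φ (‖h ·‖) ≤ phiModular μ φ (fun x => ‖g x‖ / (1 - θ)) +
      ENNReal.ofReal a * phiModular μ φ (fun x => ‖h x - g x‖ / a) := by
  have hpt : ∀ᵐ x ∂μ, ENNReal.ofReal (φ x ‖h x‖) ≤ ENNReal.ofReal (φ x (‖g x‖ / (1 - θ))) +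
      ENNReal.ofReal a * ENNReal.ofReal (φ x (‖h x - g x‖ / a)) := by
    filter_upwards [hmono, hconv, hzero] with x hmono hconv hzero
    have hle := hconv.map_le_of_le_add hmono hzero (norm_nonneg (h x)) (norm_nonneg (g x))
      (norm_nonneg (h x - g x)) (norm_le_norm_add_norm_sub' (h x) (g x)) ha haθ hθ
    rw [← ENNReal.ofReal_mul ha.le, ← ENNReal.ofReal_add
      (hmono.nonneg_of_map_zero hzero (div_nonneg (norm_nonneg _) (sub_pos.2 hθ).le))
      (mul_nonneg ha.le (hmono.nonneg_of_map_zero hzero (div_nonneg (norm_nonneg _) ha.le)))]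
    exact ENNReal.ofReal_le_ofReal hle
  calc phiModular μ φ (‖h ·‖)
      ≤ ∫⁻ x, ENNReal.ofReal (φ x (‖g x‖ / (1 - θ))) +
          ENNReal.ofReal a * ENNReal.ofReal (φ x (‖h x - g x‖ / a)) ∂μ := lintegral_mono_ae hpt
    _ = _ := by
      rw [lintegral_add_left
        (measurable_phi_norm_div hmeas hg (sub_pos.2 hθ).le).ennreal_ofReal,
        lintegral_const_mul' _ _ ENNReal.ofReal_ne_top]
      rfl

theorem limsup_phiModular_norm_le {ι : Type*} {l : Filter ι} [l.NeBot]
    (hmeas : ∀ f : α → ℝ, Measurable f → Measurable fun x => φ x |f x|)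
    (hmono : ∀ᵐ x ∂μ, MonotoneOn (φ x) (Ici 0)) (hconv : ∀ᵐ x ∂μ, ConvexOn ℝ (Ici 0) (φ x))
    (hzero : ∀ᵐ x ∂μ, φ x 0 = 0) {g : α → E} {G : ι → α → E} (hg : Measurable g)
    {a : ι → ℝ} (ha : ∀ k, 0 < a k) (ha0 : Tendsto a l (𝓝 0))
    (hbd : ∀ k, phiModular μ φ (fun x => ‖G k x - g x‖ / a k) ≤ 1) {θ : ℝ} (hθ : θ ∈ Ioo 0 1) :
    limsup (fun k => phiModular μ φ (‖G k ·‖)) l ≤ phiModular μ φ (fun x => ‖g x‖ / (1 - θ)) := by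
  have hev : ∀ᶠ k in l, phiModular μ φ (‖G k ·‖) ≤
      phiModular μ φ (fun x => ‖g x‖ / (1 - θ)) + ENNReal.ofReal (a k) := by
    filter_upwards [ha0.eventually_le_const hθ.1] with k hak
    calc phiModular μ φ (‖G k ·‖)
        ≤ phiModular μ φ (fun x => ‖g x‖ / (1 - θ)) +
          ENNReal.ofReal (a k) * phiModular μ φ (fun x => ‖G k x - g x‖ / a k) :=
          phiModular_norm_le_add hmeas hmono hconv hzero hg (ha k) hak hθ.2
      _ ≤ _ := by grw [hbd k, mul_one]
  have hlim : Tendsto (fun k => phiModular μ φ (fun x => ‖g x‖ / (1 - θ)) + ENNReal.ofReal (a k))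
      l (𝓝 (phiModular μ φ (fun x => ‖g x‖ / (1 - θ)))) := by
    simpa using (ENNReal.tendsto_ofReal ha0).const_add _
  exact (limsup_le_limsup hev).trans_eq hlim.limsup_eq

theorem tendsto_phiModular_norm_div_one_sub
    (hmeas : ∀ f : α → ℝ, Measurable f → Measurable fun x => φ x |f x|)
    (hmono : ∀ᵐ x ∂μ, MonotoneOn (φ x) (Ici 0)) (hconv : ∀ᵐ x ∂μ, ConvexOn ℝ (Ici 0) (φ x))
    (hzero : ∀ᵐ x ∂μ, φ x 0 = 0) {q L : ℝ} (hq : 0 ≤ q) (hL : 0 ≤ L)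
    (hdec : ∀ᵐ x ∂μ, ∀ s t : ℝ, 0 < s → s ≤ t → φ x t / t ^ q ≤ L * (φ x s / s ^ q))
    {g : α → E} (hg : Measurable g) (hfin : phiModular μ φ (‖g ·‖) ≠ ⊤) :
    Tendsto (fun θ => phiModular μ φ (fun x => ‖g x‖ / (1 - θ))) (𝓝[>] 0)
      (𝓝 (phiModular μ φ (‖g ·‖))) := by
  have hsmall : ∀ᶠ θ in 𝓝[>] (0 : ℝ), θ ∈ Ioc 0 (1 / 2) := Ioc_mem_nhdsGT (by norm_num)
  refine tendsto_lintegral_filter_of_dominated_convergence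
    (fun x => ENNReal.ofReal (L * 2 ^ q) * ENNReal.ofReal (φ x ‖g x‖)) ?_ ?_ ?_ ?_
  · filter_upwards [hsmall] with θ hθ
    exact (measurable_phi_norm_div hmeas hg (by linarith [hθ.2])).ennreal_ofReal
  · filter_upwards [hsmall] with θ hθ
    filter_upwards [hmono, hzero, hdec] with x hmono hzero hdec
    rw [← ENNReal.ofReal_mul (by positivity)]
    refine ENNReal.ofReal_le_ofReal ?_
    rcases (norm_nonneg (g x)).eq_or_lt with h0 | hpos
    · simp [← h0, hzero]
    · exact map_div_one_sub_le_of_aDec hdec hq hL hpos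
        (hmono.nonneg_of_map_zero hzero hpos.le) hθ.1.le hθ.2
  · rw [lintegral_const_mul' _ _ ENNReal.ofReal_ne_top]
    exact ENNReal.mul_ne_top ENNReal.ofReal_ne_top hfin
  · filter_upwards [hconv] with x hconv
    exact ENNReal.tendsto_ofReal
      ((hconv.tendsto_map_div_one_sub (norm_nonneg (g x))).mono_left nhdsWithin_le_nhds)

end PhiModular

theorem statement3_general {n m : ℕ} (Ω : Set (Eucl n)) (hΩ : MeasurableSet Ω)
    (φ : Eucl n → ℝ → ℝ)
    (hmeas : ∀ f : Eucl n → ℝ, Measurable f → Measurable fun x => φ x |f x|)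
    (hmono : ∀ x ∈ Ω, MonotoneOn (φ x) (Ici (0:ℝ)))
    (hconv : ∀ x ∈ Ω, ConvexOn ℝ (Ici (0:ℝ)) (φ x))
    (hzero : ∀ x ∈ Ω, φ x 0 = 0)
    (q Lq : ℝ) (hq : 1 < q) (hLq : 1 ≤ Lq)
    (haDec : ∀ x ∈ Ω, ∀ s t : ℝ, 0 < s → s ≤ t → φ x t / t ^ q ≤ Lq * (φ x s / s ^ q))
    (g : Eucl n → Eucl m) (G : ℕ → Eucl n → Eucl m)
    (hg : Measurable g)
    (hgfin : ∫⁻ x in Ω, ENNReal.ofReal (φ x ‖g x‖) < ⊤)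
    (a : ℕ → ℝ) (ha : ∀ k, 0 < a k) (ha0 : Tendsto a atTop (𝓝 0))
    (hbd : ∀ k, ∫⁻ x in Ω, ENNReal.ofReal (φ x (‖G k x - g x‖ / a k)) ≤ 1) :
    Filter.limsup (fun k => ∫⁻ x in Ω, ENNReal.ofReal (φ x ‖G k x‖)) atTop ≤
      ∫⁻ x in Ω, ENNReal.ofReal (φ x ‖g x‖) := by
  have hmono' := ae_restrict_of_forall_mem (μ := volume) hΩ hmono
  have hconv' := ae_restrict_of_forall_mem (μ := volume) hΩ hconv
  have hzero' := ae_restrict_of_forall_mem (μ := volume) hΩ hzero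
  refine ge_of_tendsto (tendsto_phiModular_norm_div_one_sub hmeas hmono' hconv' hzero'
    (zero_le_one.trans hq.le) (zero_le_one.trans hLq)
    (ae_restrict_of_forall_mem hΩ haDec) hg hgfin.ne) ?_
  filter_upwards [Ioo_mem_nhdsGT one_pos] with θ hθ
  exact limsup_phiModular_norm_le hmeas hmono' hconv' hzero' hg ha ha0 hbd hθ

/-- modular convergence implies limsup of modulars bounded by the limit modular. -/
theorem statement3 {n m : ℕ} (Ω : Set (Eucl n)) (hΩ : MeasurableSet Ω)
    (φ : Eucl n → ℝ → ℝ)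
    (hmeas : ∀ f : Eucl n → ℝ, Measurable f → Measurable fun x => φ x |f x|)
    (hnonneg : ∀ x ∈ Ω, ∀ t : ℝ, 0 ≤ t → 0 ≤ φ x t)
    (hmono : ∀ x ∈ Ω, MonotoneOn (φ x) (Ici (0:ℝ)))
    (hconv : ∀ x ∈ Ω, ConvexOn ℝ (Ici (0:ℝ)) (φ x))
    (hzero : ∀ x ∈ Ω, φ x 0 = 0)
    (hinf : ∀ x ∈ Ω, Tendsto (φ x) atTop atTop)
    (hainc : ∃ L₁ : ℝ, 1 ≤ L₁ ∧ ∀ x ∈ Ω, ∀ s t : ℝ, 0 < s → s ≤ t →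
      φ x s / s ≤ L₁ * (φ x t / t))
    (q Lq : ℝ) (hq : 1 < q) (hLq : 1 ≤ Lq)
    (haDec : ∀ x ∈ Ω, ∀ s t : ℝ, 0 < s → s ≤ t → φ x t / t ^ q ≤ Lq * (φ x s / s ^ q))
    (g : Eucl n → Eucl m) (G : ℕ → Eucl n → Eucl m)
    (hg : Measurable g) (hG : ∀ k, Measurable (G k))
    (hgfin : ∫⁻ x in Ω, ENNReal.ofReal (φ x ‖g x‖) < ⊤)
    (a : ℕ → ℝ) (ha : ∀ k, 0 < a k) (ha0 : Tendsto a atTop (𝓝 0))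
    (hbd : ∀ k, ∫⁻ x in Ω, ENNReal.ofReal (φ x (‖G k x - g x‖ / a k)) ≤ 1) :
    Filter.limsup (fun k => ∫⁻ x in Ω, ENNReal.ofReal (φ x ‖G k x‖)) atTop ≤
      ∫⁻ x in Ω, ENNReal.ofReal (φ x ‖g x‖) :=
  statement3_general Ω hΩ φ hmeas hmono hconv hzero q Lq hq hLq haDec g G hg hgfin a ha ha0 hbd
end
end

section
/- Let Ω ⊆ ℝⁿ be a bounded open set with Lipschitz boundary, q > 1, and a : Ω → [0,∞) measurable, and define the double-phase function φ_dp(x,t) = t + a(x)·t^q. Then φ_dp satisfies the condition (RVA1) if and only if both of the following hold: (i) there is C > 0 such that a(y) ≤ C·(a(x) + |x−y|^{n(q−1)}) for all x, y ∈ Ω; and (ii) for every ε > 0 there is r > 0 such that a(x) ≤ ε·|x−y|^{n(q−1)} whenever x, y ∈ Ω, a(y) = 0 and 0 < |x−y| < r. -/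
open MeasureTheory Set Filter Topology
open scoped ENNReal NNReal

noncomputable section

/-!
Everything is decided by testing (A1) and (RVA1) at one well-chosen `t` for each pair `x, y`,
with `r = |x - y|ⁿ`, so that `|x - y|^{n(q-1)} = r^{q-1}`.

(A1) ⇒ (i): the choice `t^q ≍ 1 / (r (a(x) + r^{q-1}))` keeps `r φ(x,t) ≤ 1` and turns
`φ(y, βt) ≤ φ(x,t) + 1` into `a(y) ≲ a(x) + r^{q-1}`; the `+ 1` is absorbed into `1/r` because
`Ω` is bounded.
(RVA1) ⇒ (ii): where `a(y) = 0` the recession function is finite, and `t = 1/r` gives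
`a(x) ≤ 2^{q+1} ω(|x - y|) r^{q-1}`.
(i) ⇒ (A1): `r t ≤ K` gives `a(x) (βt)^q ≤ C β^q (a(y) t^q + K^{q-1} t)`, which the gap
`(1 - β) t` absorbs once `β` is small.
(i) ∧ (ii) ⇒ (RVA1): the two conditions yield a modulus `E` with
`a(x) ≤ E(|x - y|) |x - y|^{n(q-1)}` whenever `a(y) = 0`, hence `a(x) t^q ≤ K^{q-1} E t`, which is
exactly what dividing `t` by `1 + K^{q-1} E` absorbs.
-/

lemma rpow_sub_one_mul_rpow {q r t : ℝ} (hr : 0 ≤ r) (ht : 0 < t) :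
    r ^ (q - 1) * t ^ q = (r * t) ^ (q - 1) * t := by
  rw [Real.mul_rpow hr ht.le, Real.rpow_sub_one ht.ne']
  field_simp

lemma coeff_le_of_scaled_le {q β M r α γ : ℝ} (hq : 1 < q) (hβ : 0 < β) (hr : 0 < r)
    (hrM : r ≤ M) (hγ : 0 ≤ γ)
    (h : ∀ t, 0 < t → r * (t + γ * t ^ q) ≤ 1 → β * t + α * (β * t) ^ q ≤ t + γ * t ^ q + 1) :
    α ≤ 2 ^ q * (1 + M) / β ^ q * (γ + r ^ (q - 1)) := by
  set u := r ^ (q - 1) with hu_def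
  have hu : 0 < u := Real.rpow_pos_of_pos hr _
  have hru : r ^ q = u * r := by rw [hu_def, Real.rpow_sub_one hr.ne', div_mul_cancel₀ _ hr.ne']
  have h2q : 2 ≤ (2 : ℝ) ^ q := by
    simpa using Real.rpow_le_rpow_of_exponent_le one_le_two hq.le
  -- `t` balances the two phases: `r t ≤ 1/2` and `r γ t ^ q ≤ 1/2`.
  set t := (2 * r)⁻¹ * (u / (γ + u)) ^ q⁻¹ with ht_def
  have ht : 0 < t := by positivity
  have htq : t ^ q = (2 ^ q * r * (γ + u))⁻¹ := by
    rw [Real.mul_rpow (by positivity) (by positivity), Real.rpow_inv_rpow (by positivity)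
      (by positivity), Real.inv_rpow (by positivity), Real.mul_rpow zero_le_two hr.le, hru]
    field_simp
  have hrt : r * t ≤ 1 / 2 := by
    have : (u / (γ + u)) ^ q⁻¹ ≤ 1 :=
      Real.rpow_le_one (by positivity) ((div_le_one (by positivity)).2 (by linarith))
        (by positivity)
    calc r * t = (u / (γ + u)) ^ q⁻¹ / 2 := by rw [ht_def]; field_simp
      _ ≤ 1 / 2 := by linarith
  have hrγt : r * (γ * t ^ q) ≤ 1 / 2 := by
    rw [htq, ← div_eq_mul_inv, mul_div_assoc', div_le_div_iff₀ (by positivity) two_pos]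
    nlinarith [mul_le_mul_of_nonneg_right h2q (add_pos_of_nonneg_of_pos hγ hu).le]
  have key := h t ht (by nlinarith)
  rw [Real.mul_rpow hβ.le ht.le] at key
  have hbound : α * β ^ q * (r * t ^ q) ≤ 1 + M := by
    nlinarith [mul_le_mul_of_nonneg_left key hr.le, mul_pos hr (mul_pos hβ ht)]
  calc α = α * β ^ q * (r * t ^ q) * (2 ^ q * (γ + u)) / β ^ q := by
        rw [htq]; field_simp
    _ ≤ (1 + M) * (2 ^ q * (γ + u)) / β ^ q := by gcongr
    _ = 2 ^ q * (1 + M) / β ^ q * (γ + u) := by ring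

lemma coeff_le_of_shrunk_le {q r w α : ℝ} (hq : 0 ≤ q) (hr : 0 < r) (hr1 : r ≤ 1) (hw : 0 ≤ w)
    (hw1 : w ≤ 1) (h : r⁻¹ / (1 + w) + α * (r⁻¹ / (1 + w)) ^ q ≤ r⁻¹ + w) :
    α ≤ 2 ^ (q + 1) * w * r ^ (q - 1) := by
  set t := r⁻¹ with ht_def
  have ht : 1 ≤ t := one_le_inv₀ hr |>.2 hr1
  have hshrink : t * (1 - w) ≤ t / (1 + w) := by
    rw [le_div_iff₀ (by positivity)]
    nlinarith [mul_nonneg (zero_le_one.trans ht) (sq_nonneg w)]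
  have hgain : α * t ^ q / (1 + w) ^ q ≤ 2 * t * w := by
    rw [Real.div_rpow (by positivity) (by positivity)] at h
    rw [mul_div_assoc]
    nlinarith
  have hbound : α * t ^ q ≤ 2 ^ (q + 1) * w * t := by
    rw [div_le_iff₀ (by positivity)] at hgain
    calc α * t ^ q ≤ 2 * t * w * (1 + w) ^ q := hgain
      _ ≤ 2 * t * w * 2 ^ q := by gcongr; linarith
      _ = 2 ^ (q + 1) * w * t := by rw [Real.rpow_add_one two_ne_zero]; ring
  have htq : t ^ q = (r ^ (q - 1))⁻¹ * t := by
    rw [← Real.inv_rpow hr.le, ← ht_def, Real.rpow_sub_one (by positivity), div_mul_cancel₀]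
    positivity
  rw [htq, ← mul_assoc] at hbound
  rw [← div_le_iff₀ (by positivity)]
  exact le_of_mul_le_mul_right hbound (by positivity)

lemma scaled_le_of_coeff_le {q C K β r t α γ : ℝ} (hq : 1 < q) (hC : 0 ≤ C) (hβ : 0 < β)
    (hCβ : C * β ^ q ≤ 1) (hβK : β + C * β ^ q * K ^ (q - 1) ≤ 1) (hr : 0 ≤ r) (ht : 0 < t)
    (hγ : 0 ≤ γ) (hα : α ≤ C * (γ + r ^ (q - 1))) (hK : r * (t + γ * t ^ q) ≤ K) :
    β * t + α * (β * t) ^ q ≤ t + γ * t ^ q := by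
  have hrtK : (r * t) ^ (q - 1) ≤ K ^ (q - 1) :=
    Real.rpow_le_rpow (by positivity)
      (by nlinarith [mul_nonneg hr (mul_nonneg hγ (Real.rpow_nonneg ht.le q))]) (by linarith)
  calc β * t + α * (β * t) ^ q ≤ β * t + C * (γ + r ^ (q - 1)) * (β ^ q * t ^ q) := by
        rw [Real.mul_rpow hβ.le ht.le]; gcongr
    _ = β * t + C * β ^ q * (γ * t ^ q) + C * β ^ q * ((r * t) ^ (q - 1) * t) := by
        rw [← rpow_sub_one_mul_rpow hr ht]; ring
    _ ≤ β * t + 1 * (γ * t ^ q) + C * β ^ q * (K ^ (q - 1) * t) := by gcongr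
    _ ≤ t + γ * t ^ q := by nlinarith

lemma shrunk_le_of_mul_rpow_le {q w t α : ℝ} (hq : 1 ≤ q) (hw : 0 ≤ w) (ht : 0 ≤ t)
    (hα : α * t ^ q ≤ w * t) : t / (1 + w) + α * (t / (1 + w)) ^ q ≤ t := by
  have hgrow : 1 + w ≤ (1 + w) ^ q := by
    simpa using Real.rpow_le_rpow_of_exponent_le (by linarith : 1 ≤ 1 + w) hq
  calc t / (1 + w) + α * (t / (1 + w)) ^ q
      = t / (1 + w) + α * t ^ q / (1 + w) ^ q := by
        rw [Real.div_rpow ht (by positivity), mul_div_assoc]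
    _ ≤ t / (1 + w) + w * t / (1 + w) := by gcongr
    _ = t := by field_simp

namespace IsModulus

lemma const_mul {ω : ℝ → ℝ} (hω : IsModulus ω) {c : ℝ} (hc : 0 ≤ c) :
    IsModulus fun d => c * ω d := by
  obtain ⟨hcont, hmono, hzero, hnonneg⟩ := hω
  exact ⟨continuousOn_const.mul hcont, fun s hs t ht hst => mul_le_mul_of_nonneg_left
    (hmono hs ht hst) hc, by simp [hzero], fun r hr => mul_nonneg hc (hnonneg r hr)⟩

lemma exists_pos_forall_lt {ω : ℝ → ℝ} (hω : IsModulus ω) {δ : ℝ} (hδ : 0 < δ) :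
    ∃ r, 0 < r ∧ ∀ d, 0 ≤ d → d < r → ω d < δ := by
  have h := hω.1 0 self_mem_Ici
  rw [ContinuousWithinAt, hω.2.2.1, Metric.tendsto_nhdsWithin_nhds] at h
  obtain ⟨r, hr, hball⟩ := h δ hδ
  refine ⟨r, hr, fun d hd hdr => ?_⟩
  have := hball hd (by rwa [Real.dist_0_eq_abs, abs_of_nonneg hd])
  rwa [Real.dist_0_eq_abs, abs_of_nonneg (hω.2.2.2 d hd)] at this

end IsModulus

lemma continuousOn_integral_comp_mul {f : ℝ → ℝ} (hf : ∀ a b, IntervalIntegrable f volume a b)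
    (a b : ℝ) : ContinuousOn (fun d => ∫ s in a..b, f (d * s)) {0}ᶜ := by
  set F := fun c => ∫ u in (0 : ℝ)..c, f u
  have hF : Continuous F := intervalIntegral.continuous_primitive hf 0
  refine ContinuousOn.congr (f := fun d => d⁻¹ * (F (d * b) - F (d * a))) ?_ fun d hd => ?_
  · exact continuousOn_inv₀.mul ((hF.comp (continuous_mul_const b)).sub
      (hF.comp (continuous_mul_const a))).continuousOn
  · rw [intervalIntegral.integral_comp_mul_left _ hd, smul_eq_mul,
      ← intervalIntegral.integral_interval_sub_left (hf 0 _) (hf 0 _)]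

/-- The average `d ↦ ∫₁² A (d s) ds` works: it lies between `A d` and `A (2d)`. -/
lemma exists_isModulus_ge {A : ℝ → ℝ} (hmono : Monotone A) (hzero : A 0 = 0)
    (hcont : ContinuousWithinAt A (Ici 0) 0) :
    ∃ E : ℝ → ℝ, IsModulus E ∧ ∀ d, 0 ≤ d → A d ≤ E d := by
  set E := fun d => ∫ s in (1 : ℝ)..2, A (d * s)
  have hint {d : ℝ} (hd : 0 ≤ d) : IntervalIntegrable (fun s => A (d * s)) volume 1 2 :=
    (hmono.comp (monotone_mul_left_of_nonneg hd)).intervalIntegrable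
  have hmonoE : MonotoneOn E (Ici 0) := fun d₁ hd₁ d₂ hd₂ h =>
    intervalIntegral.integral_mono_on one_le_two (hint hd₁) (hint hd₂) fun s hs =>
      hmono (mul_le_mul_of_nonneg_right h (by linarith [hs.1]))
  have hlower {d : ℝ} (hd : 0 ≤ d) : A d ≤ E d := by
    simpa [E, show (2 : ℝ) - 1 = 1 by norm_num] using
      intervalIntegral.integral_mono_on one_le_two intervalIntegrable_const (hint hd)
      fun s hs => hmono (le_mul_of_one_le_right hd hs.1)
  have hupper {d : ℝ} (hd : 0 ≤ d) : E d ≤ A (2 * d) := by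
    simpa [E, show (2 : ℝ) - 1 = 1 by norm_num] using
      intervalIntegral.integral_mono_on one_le_two (hint hd) intervalIntegrable_const
      fun s hs => hmono (by nlinarith [hs.2] : d * s ≤ 2 * d)
  have hE0 : E 0 = 0 := by simp [E, hzero]
  have hcontE : ContinuousOn E (Ici 0) := by
    intro d hd
    rcases (mem_Ici.1 hd).eq_or_lt with rfl | hpos
    · have hA : Tendsto A (𝓝[≥] 0) (𝓝 0) := by simpa [ContinuousWithinAt, hzero] using hcont
      have hA2 : Tendsto (fun d => A (2 * d)) (𝓝[≥] 0) (𝓝 0) := by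
        refine hA.comp (tendsto_nhdsWithin_of_tendsto_nhds_of_eventually_within _ ?_ ?_)
        · exact ((continuous_const_mul 2).tendsto' 0 0 (mul_zero 2)).mono_left nhdsWithin_le_nhds
        · exact eventually_nhdsWithin_of_forall fun d hd => by simpa using mem_Ici.1 hd
      rw [ContinuousWithinAt, hE0]
      refine tendsto_of_tendsto_of_tendsto_of_le_of_le' hA hA2
        (eventually_nhdsWithin_of_forall fun d hd => hlower hd)
        (eventually_nhdsWithin_of_forall fun d hd => hupper hd)
    · exact ((continuousOn_integral_comp_mul (fun _ _ => hmono.intervalIntegrable) 1 2).continuousAt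
        (isOpen_compl_singleton.mem_nhds hpos.ne')).continuousWithinAt
  have hnonneg (d : ℝ) (hd : 0 ≤ d) : 0 ≤ E d :=
    hzero ▸ (hlower le_rfl).trans (hmonoE self_mem_Ici hd hd)
  exact ⟨E, ⟨hcontE, hmonoE, hE0, hnonneg⟩, fun d hd => hlower hd⟩

section ZeroSetRatios

variable {X : Type*} [MetricSpace X] {Ω : Set X} {a : X → ℝ} {p : ℝ}

def zeroSetRatios (Ω : Set X) (a : X → ℝ) (p d : ℝ) : Set ℝ :=
  {s | ∃ x ∈ Ω, ∃ y ∈ Ω, a y = 0 ∧ 0 < dist x y ∧ dist x y ≤ d ∧ s = a x / dist x y ^ p}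

lemma zeroSetRatios_mono : Monotone (zeroSetRatios Ω a p) := by
  rintro d d' hd s ⟨x, hx, y, hy, hay, hxy, hxyd, rfl⟩
  exact ⟨x, hx, y, hy, hay, hxy, hxyd.trans hd, rfl⟩

lemma zeroSetRatios_zero : zeroSetRatios Ω a p 0 = ∅ :=
  eq_empty_of_forall_notMem fun _ ⟨_, _, _, _, _, hxy, hxy0, _⟩ => (hxy.trans_le hxy0).false

lemma bddAbove_insert_zeroSetRatios {C : ℝ}
    (hC : ∀ x ∈ Ω, ∀ y ∈ Ω, a y = 0 → 0 < dist x y → a x ≤ C * dist x y ^ p) (d : ℝ) :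
    BddAbove (insert 0 (zeroSetRatios Ω a p d)) := by
  refine ⟨max C 0, ?_⟩
  rintro s (rfl | ⟨x, hx, y, hy, hay, hxy, -, rfl⟩)
  · exact le_max_right _ _
  · rw [div_le_iff₀ (Real.rpow_pos_of_pos hxy p)]
    exact (hC x hx y hy hay hxy).trans
      (mul_le_mul_of_nonneg_right (le_max_left _ _) (Real.rpow_nonneg hxy.le p))

lemma exists_isModulus_le_mul_dist_rpow {C : ℝ}
    (hC : ∀ x ∈ Ω, ∀ y ∈ Ω, a y = 0 → 0 < dist x y → a x ≤ C * dist x y ^ p)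
    (hsmall : ∀ ε : ℝ, 0 < ε → ∃ r : ℝ, 0 < r ∧ ∀ x ∈ Ω, ∀ y ∈ Ω, a y = 0 →
      0 < dist x y → dist x y < r → a x ≤ ε * dist x y ^ p) :
    ∃ E : ℝ → ℝ, IsModulus E ∧ ∀ x ∈ Ω, ∀ y ∈ Ω, a y = 0 → a x ≤ E (dist x y) * dist x y ^ p := by
  set A := fun d => sSup (insert 0 (zeroSetRatios Ω a p d))
  have hbdd := bddAbove_insert_zeroSetRatios hC
  have hnonneg (d : ℝ) : 0 ≤ A d := le_csSup (hbdd d) (mem_insert _ _)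
  have hmono : Monotone A := fun d d' hd =>
    csSup_le_csSup (hbdd d') (insert_nonempty _ _) (insert_subset_insert (zeroSetRatios_mono hd))
  have hzero : A 0 = 0 := by simp [A, zeroSetRatios_zero]
  have hcont : ContinuousWithinAt A (Ici 0) 0 := by
    rw [ContinuousWithinAt, hzero, Metric.tendsto_nhdsWithin_nhds]
    intro ε hε
    obtain ⟨r, hr, hratio⟩ := hsmall (ε / 2) (half_pos hε)
    refine ⟨r, hr, fun d hd hdr => ?_⟩
    rw [Real.dist_0_eq_abs, abs_of_nonneg (mem_Ici.1 hd)] at hdr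
    rw [Real.dist_0_eq_abs, abs_of_nonneg (hnonneg d)]
    refine (csSup_le (insert_nonempty _ _) ?_).trans_lt (half_lt_self hε)
    rintro s (rfl | ⟨x, hx, y, hy, hay, hxy, hxyd, rfl⟩)
    · exact (half_pos hε).le
    · rw [div_le_iff₀ (Real.rpow_pos_of_pos hxy p)]
      exact hratio x hx y hy hay hxy (hxyd.trans_lt hdr)
  obtain ⟨E, hE, hAE⟩ := exists_isModulus_ge hmono hzero hcont
  refine ⟨E, hE, fun x hx y hy hay => ?_⟩
  rcases (dist_nonneg (x := x) (y := y)).eq_or_lt with hxy | hxy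
  · rw [← hxy, hE.2.2.1, zero_mul, dist_eq_zero.1 hxy.symm, hay]
  · have hle : a x / dist x y ^ p ≤ A (dist x y) :=
      le_csSup (hbdd _) (mem_insert_of_mem _ ⟨x, hx, y, hy, hay, hxy, le_rfl, rfl⟩)
    rw [div_le_iff₀ (Real.rpow_pos_of_pos hxy p)] at hle
    exact hle.trans (mul_le_mul_of_nonneg_right (hAE _ hxy.le) (Real.rpow_nonneg hxy.le p))

end ZeroSetRatios

def doublePhase {X : Type*} (a : X → ℝ) (q : ℝ) (x : X) (t : ℝ) : ℝ := t + a x * t ^ q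

lemma recessionFn_doublePhase_lt_top_iff {n : ℕ} {a : Eucl n → ℝ} {q : ℝ} (hq : 1 < q)
    {x : Eucl n} (hx : 0 ≤ a x) : recessionFn (doublePhase a q) x < ⊤ ↔ a x = 0 := by
  have hquot : (fun t => doublePhase a q x t / t) =ᶠ[atTop] fun t => 1 + a x * t ^ (q - 1) := by
    filter_upwards [eventually_gt_atTop 0] with t ht
    rw [doublePhase, Real.rpow_sub_one ht.ne']
    field_simp
  unfold recessionFn
  constructor
  · intro hfin
    by_contra hne
    have hdiv : Tendsto (fun t => doublePhase a q x t / t) atTop atTop :=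
      (tendsto_atTop_add_const_left _ 1 ((tendsto_rpow_atTop (by linarith)).const_mul_atTop
        (hx.lt_of_ne' hne))).congr' hquot.symm
    have htop : Tendsto (fun t => ENNReal.ofReal (doublePhase a q x t / t)) atTop (𝓝 ⊤) :=
      ENNReal.tendsto_ofReal_atTop.comp hdiv
    exact hfin.ne htop.limsup_eq
  · intro hzero
    have hone : (fun t => ENNReal.ofReal (doublePhase a q x t / t)) =ᶠ[atTop] fun _ => 1 := by
      filter_upwards [hquot] with t ht
      simp [ht, hzero]
    rw [limsup_congr hone, limsup_const]
    exact ENNReal.one_lt_top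

section DoublePhaseConditions

variable {n : ℕ} {Ω : Set (Eucl n)} {q : ℝ} {a : Eucl n → ℝ}

lemma exists_growth_bound_of_condA1 (hΩ : Bornology.IsBounded Ω) (hq : 1 < q)
    (ha : ∀ x, 0 ≤ a x) (h : CondA1 Ω (doublePhase a q)) :
    ∃ C : ℝ, 0 < C ∧ ∀ x ∈ Ω, ∀ y ∈ Ω, a y ≤ C * (a x + dist x y ^ ((n : ℝ) * (q - 1))) := by
  obtain ⟨β, hβ, hβ1, hjump⟩ := h 1 one_pos
  set M := Metric.diam Ω ^ n
  set C := 2 ^ q * (1 + M) / β ^ q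
  have hC : 1 ≤ C := by
    rw [le_div_iff₀ (by positivity), one_mul]
    calc β ^ q ≤ 1 := Real.rpow_le_one hβ.le hβ1 (by linarith)
      _ ≤ 2 ^ q * (1 + M) := one_le_mul_of_one_le_of_one_le
          (Real.one_le_rpow one_le_two (by linarith)) (le_add_of_nonneg_right (by positivity))
  refine ⟨C, zero_lt_one.trans_le hC, fun x hx y hy => ?_⟩
  rw [Real.rpow_natCast_mul dist_nonneg]
  rcases (dist_nonneg (x := x) (y := y)).eq_or_lt with hxy | hxy
  · rw [dist_eq_zero.1 hxy.symm]
    nlinarith [ha y, Real.rpow_nonneg (pow_nonneg (dist_nonneg (x := y) (y := y)) n) (q - 1)]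
  · rw [dist_comm] at hxy ⊢
    exact coeff_le_of_scaled_le hq hβ (pow_pos hxy n)
      (pow_le_pow_left₀ dist_nonneg (Metric.dist_le_diam_of_mem hΩ hy hx) n) (ha x)
      fun t ht hK => hjump y hy x hx t ht hK

lemma decay_of_condRVA1 (hq : 1 < q) (ha : ∀ x, 0 ≤ a x) (h : CondRVA1 Ω (doublePhase a q)) :
    ∀ ε : ℝ, 0 < ε → ∃ r : ℝ, 0 < r ∧ ∀ x ∈ Ω, ∀ y ∈ Ω, a y = 0 →
      0 < dist x y → dist x y < r → a x ≤ ε * dist x y ^ ((n : ℝ) * (q - 1)) := by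
  intro ε hε
  obtain ⟨ω, hω, hshrink⟩ := h.2 1 one_pos
  obtain ⟨r, hr, hωr⟩ := hω.exists_pos_forall_lt
    (lt_min one_pos (by positivity) : 0 < min 1 (ε / 2 ^ (q + 1)))
  refine ⟨min r 1, lt_min hr one_pos, fun x hx y hy hay hxy hxyr => ?_⟩
  have hd1 : dist x y ^ n ≤ 1 := pow_le_one₀ hxy.le (hxyr.trans_le (min_le_right _ _)).le
  have hdn : 0 < dist x y ^ n := pow_pos hxy n
  have hω1 := (hωr _ hxy.le (hxyr.trans_le (min_le_left _ _))).le
  have hfin := (recessionFn_doublePhase_lt_top_iff hq (ha y)).2 hay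
  have key := hshrink x hx y hy (Or.inr hfin) _ (inv_pos.2 hdn)
    (by simp [doublePhase, hay, hdn.ne'])
  simp only [doublePhase, hay, zero_mul, add_zero] at key
  rw [Real.rpow_natCast_mul hxy.le]
  calc a x ≤ 2 ^ (q + 1) * ω (dist x y) * (dist x y ^ n) ^ (q - 1) :=
        coeff_le_of_shrunk_le (by linarith) hdn hd1 (hω.2.2.2 _ hxy.le)
          (hω1.trans (min_le_left _ _)) key
    _ ≤ ε * (dist x y ^ n) ^ (q - 1) := by
        gcongr
        rw [← le_div_iff₀' (by positivity)]
        exact hω1.trans (min_le_right _ _)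

lemma condA1_of_growth_bound (hq : 1 < q) (ha : ∀ x, 0 ≤ a x) {C : ℝ} (hC : 0 < C)
    (hgrowth : ∀ x ∈ Ω, ∀ y ∈ Ω, a y ≤ C * (a x + dist x y ^ ((n : ℝ) * (q - 1)))) :
    CondA1 Ω (doublePhase a q) := by
  intro K hK
  have hf : Tendsto (fun β => β + C * β ^ q * (1 + K ^ (q - 1))) (𝓝[>] 0) (𝓝 0) := by
    have hcont : Continuous fun β : ℝ => β + C * β ^ q * (1 + K ^ (q - 1)) := by
      have := Real.continuous_rpow_const (q := q) (by linarith)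
      fun_prop
    simpa [Real.zero_rpow (by linarith : q ≠ 0)] using
      (hcont.tendsto 0).mono_left nhdsWithin_le_nhds
  obtain ⟨β, hβf, hβ : 0 < β⟩ :=
    ((hf.eventually (gt_mem_nhds one_pos)).and self_mem_nhdsWithin).exists
  have hCβ : 0 ≤ C * β ^ q := by positivity
  have hKq : 0 ≤ K ^ (q - 1) := by positivity
  refine ⟨β, hβ, by nlinarith, fun x hx y hy t ht hK' => ?_⟩
  have hgrowth' : a x ≤ C * (a y + (dist x y ^ n) ^ (q - 1)) := by
    rw [← Real.rpow_natCast_mul dist_nonneg, dist_comm]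
    exact hgrowth y hy x hx
  have := scaled_le_of_coeff_le hq hC.le hβ (by nlinarith) (by nlinarith)
    (pow_nonneg dist_nonneg n) ht (ha y) hgrowth' hK'
  simp only [doublePhase]
  linarith

lemma condRVA1_of_growth_bound_of_decay (hq : 1 < q) (ha : ∀ x, 0 ≤ a x) {C : ℝ} (hC : 0 < C)
    (hgrowth : ∀ x ∈ Ω, ∀ y ∈ Ω, a y ≤ C * (a x + dist x y ^ ((n : ℝ) * (q - 1))))
    (hdecay : ∀ ε : ℝ, 0 < ε → ∃ r : ℝ, 0 < r ∧ ∀ x ∈ Ω, ∀ y ∈ Ω, a y = 0 →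
      0 < dist x y → dist x y < r → a x ≤ ε * dist x y ^ ((n : ℝ) * (q - 1))) :
    CondRVA1 Ω (doublePhase a q) := by
  refine ⟨condA1_of_growth_bound hq ha hC hgrowth, fun K hK => ?_⟩
  have hzero (x) (hx : x ∈ Ω) (y) (hy : y ∈ Ω) (hay : a y = 0) (_ : 0 < dist x y) :
      a x ≤ C * dist x y ^ ((n : ℝ) * (q - 1)) := by
    simpa [hay, dist_comm] using hgrowth y hy x hx
  obtain ⟨E, hE, hEa⟩ := exists_isModulus_le_mul_dist_rpow hzero hdecay
  have hKq : 0 ≤ K ^ (q - 1) := by positivity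
  refine ⟨fun d => K ^ (q - 1) * E d, hE.const_mul hKq, fun x hx y hy hfin t ht hK' => ?_⟩
  have hEd : 0 ≤ E (dist x y) := hE.2.2.2 _ dist_nonneg
  have hax : a x * t ^ q ≤ K ^ (q - 1) * E (dist x y) * t := by
    rcases hfin with hx0 | hy0
    · rw [(recessionFn_doublePhase_lt_top_iff hq (ha x)).1 hx0, zero_mul]
      positivity
    · have hay := (recessionFn_doublePhase_lt_top_iff hq (ha y)).1 hy0
      have hrt : (dist x y ^ n * t) ^ (q - 1) ≤ K ^ (q - 1) :=
        Real.rpow_le_rpow (by positivity) (by simpa [doublePhase, hay] using hK') (by linarith)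
      calc a x * t ^ q ≤ E (dist x y) * (dist x y ^ n) ^ (q - 1) * t ^ q := by
            rw [← Real.rpow_natCast_mul dist_nonneg]
            gcongr
            exact hEa x hx y hy hay
        _ = E (dist x y) * ((dist x y ^ n * t) ^ (q - 1) * t) := by
            rw [mul_assoc, rpow_sub_one_mul_rpow (by positivity) ht]
        _ ≤ K ^ (q - 1) * E (dist x y) * t := by
            rw [mul_comm (K ^ (q - 1)), mul_assoc]
            gcongr
  have := shrunk_le_of_mul_rpow_le hq.le (by positivity) ht.le hax
  simp only [doublePhase]
  nlinarith [mul_nonneg (ha y) (Real.rpow_nonneg ht.le q), mul_nonneg hKq hEd]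

end DoublePhaseConditions

theorem statement16_general {n : ℕ} (Ω : Set (Eucl n)) (hΩb : Bornology.IsBounded Ω) (q : ℝ)
    (hq : 1 < q) (a : Eucl n → ℝ) (ha0 : ∀ x, 0 ≤ a x) :
    CondRVA1 Ω (fun x t => t + a x * t ^ q) ↔
      ((∃ C : ℝ, 0 < C ∧ ∀ x ∈ Ω, ∀ y ∈ Ω,
          a y ≤ C * (a x + dist x y ^ ((n : ℝ) * (q - 1)))) ∧
       (∀ ε : ℝ, 0 < ε → ∃ r : ℝ, 0 < r ∧ ∀ x ∈ Ω, ∀ y ∈ Ω, a y = 0 →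
          0 < dist x y → dist x y < r → a x ≤ ε * dist x y ^ ((n : ℝ) * (q - 1)))) := by
  constructor
  · intro h
    exact ⟨exists_growth_bound_of_condA1 hΩb hq ha0 h.1, decay_of_condRVA1 hq ha0 h⟩
  · rintro ⟨⟨C, hC, hgrowth⟩, hdecay⟩
    exact condRVA1_of_growth_bound_of_decay hq ha0 hC hgrowth hdecay

/-- characterisation of (RVA1) for the double-phase function. -/
theorem statement16 {n : ℕ} (hn : 1 ≤ n) (Ω : Set (Eucl n)) (hΩo : IsOpen Ω)
    (hΩb : Bornology.IsBounded Ω) (hΩl : HasLipschitzBoundary n Ω)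
    (q : ℝ) (hq : 1 < q) (a : Eucl n → ℝ) (hameas : Measurable a) (ha0 : ∀ x, 0 ≤ a x) :
    CondRVA1 Ω (fun x t => t + a x * t ^ q) ↔
      ((∃ C : ℝ, 0 < C ∧ ∀ x ∈ Ω, ∀ y ∈ Ω,
          a y ≤ C * (a x + dist x y ^ ((n : ℝ) * (q - 1)))) ∧
       (∀ ε : ℝ, 0 < ε → ∃ r : ℝ, 0 < r ∧ ∀ x ∈ Ω, ∀ y ∈ Ω, a y = 0 →
          0 < dist x y → dist x y < r → a x ≤ ε * dist x y ^ ((n : ℝ) * (q - 1)))) :=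
  statement16_general Ω hΩb q hq a ha0

end
end

section
/- Let Ω ⊆ ℝⁿ be a bounded open set, q > 1, a : Ω → [0,∞), and φ(x,t) = t + a(x)·t^q. Suppose there exists a modulus of continuity ω such that for all x, y ∈ Ω with a(y) = 0 and all t > 0 with t ≤ |x−y|^{−n}, one has φ(x, t/(1+ω(|x−y|))) ≤ t + ω(|x−y|). Then for every ε > 0 there is r > 0 such that a(x) ≤ ε·|x−y|^{n(q−1)} whenever x, y ∈ Ω, a(y) = 0 and 0 < |x−y| < r. -/
open MeasureTheory Set Filter Topology
open scoped ENNReal NNReal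

noncomputable section

/-! Testing the inequality at the largest admissible `t = |x - y|^{-n}` bounds `a(x)` by
`ω(d) (1 + (1 + ω(d)) dⁿ) (1 + ω(d))^{q-1} · d^{n(q-1)}` with `d = |x - y|`, and the prefactor
tends to `0` with `d` because `ω` is continuous at `0` with `ω(0) = 0`. -/

lemma le_mul_rpow_of_inv_add_mul_inv_rpow_le {u w a q : ℝ} (hu : 0 < u)
    (h : u⁻¹ + a * u⁻¹ ^ q ≤ (1 + w) * u⁻¹ + w) :
    a ≤ w * (1 + u) * u ^ (q - 1) := by
  have huq : 0 < u ^ q := Real.rpow_pos_of_pos hu q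
  rw [Real.inv_rpow hu.le] at h
  rw [Real.rpow_sub_one hu.ne']
  have hscaled : a * (u ^ q)⁻¹ ≤ w * (1 + u) * (u ^ q / u) * (u ^ q)⁻¹ := by
    rw [show w * (1 + u) * (u ^ q / u) * (u ^ q)⁻¹ = w * u⁻¹ + w by field_simp]
    linarith
  exact le_of_mul_le_mul_right hscaled (inv_pos.mpr huq)

lemma le_mul_rpow_of_doublePhase_le {n : ℕ} {d w a q : ℝ} (hd : 0 < d) (hw : 0 < 1 + w)
    (h : (d ^ n)⁻¹ / (1 + w) + a * ((d ^ n)⁻¹ / (1 + w)) ^ q ≤ (d ^ n)⁻¹ + w) :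
    a ≤ w * (1 + (1 + w) * d ^ n) * (1 + w) ^ (q - 1) * d ^ ((n : ℝ) * (q - 1)) := by
  have hdn : 0 < d ^ n := pow_pos hd n
  have hu : (d ^ n)⁻¹ / (1 + w) = (d ^ n * (1 + w))⁻¹ := by rw [mul_inv, div_eq_mul_inv]
  have ht : (d ^ n)⁻¹ = (1 + w) * (d ^ n * (1 + w))⁻¹ := by field_simp
  rw [hu, ht] at h
  calc a ≤ w * (1 + d ^ n * (1 + w)) * (d ^ n * (1 + w)) ^ (q - 1) :=
        le_mul_rpow_of_inv_add_mul_inv_rpow_le (by positivity) h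
    _ = _ := by
        rw [Real.mul_rpow hdn.le hw.le, Real.rpow_natCast_mul hd.le, ← Real.rpow_natCast]
        ring

lemma tendsto_doublePhase_prefactor {ω : ℝ → ℝ} (hc : ContinuousWithinAt ω (Ici 0) 0)
    (h0 : ω 0 = 0) (n : ℕ) (q : ℝ) :
    Tendsto (fun d => ω d * (1 + (1 + ω d) * d ^ n) * (1 + ω d) ^ (q - 1)) (𝓝[≥] 0) (𝓝 0) := by
  have hc1 : ContinuousWithinAt (fun d => 1 + ω d) (Ici 0) 0 := continuousWithinAt_const.add hc
  have hcont : ContinuousWithinAt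
      (fun d => ω d * (1 + (1 + ω d) * d ^ n) * (1 + ω d) ^ (q - 1)) (Ici 0) 0 :=
    (hc.mul (continuousWithinAt_const.add (hc1.mul (continuousWithinAt_id.pow n)))).mul
      (hc1.rpow_const (Or.inl (by simp [h0])))
  simpa [ContinuousWithinAt, h0] using hcont

theorem statement17_general {n : ℕ} (Ω : Set (Eucl n))
    (q : ℝ) (a : Eucl n → ℝ)
    (ω : ℝ → ℝ) (hω : IsModulus ω)
    (h : ∀ x ∈ Ω, ∀ y ∈ Ω, a y = 0 → ∀ t : ℝ, 0 < t → t * dist x y ^ n ≤ 1 →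
      t / (1 + ω (dist x y)) + a x * (t / (1 + ω (dist x y))) ^ q ≤ t + ω (dist x y)) :
    ∀ ε : ℝ, 0 < ε → ∃ r : ℝ, 0 < r ∧ ∀ x ∈ Ω, ∀ y ∈ Ω, a y = 0 →
      0 < dist x y → dist x y < r → a x ≤ ε * dist x y ^ ((n : ℝ) * (q - 1)) := by
  obtain ⟨hωc, -, hω0, hωnn⟩ := hω
  intro ε hε
  obtain ⟨r, hr, hsmall⟩ := Metric.tendsto_nhdsWithin_nhds.1
    (tendsto_doublePhase_prefactor (hωc 0 self_mem_Ici) hω0 n q) ε hε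
  refine ⟨r, hr, fun x hx y hy hay hd hdr => ?_⟩
  have hdn : 0 < dist x y ^ n := pow_pos hd n
  have hprefactor := hsmall (mem_Ici.2 hd.le) (by rwa [Real.dist_0_eq_abs, abs_of_pos hd])
  rw [Real.dist_0_eq_abs] at hprefactor
  calc a x ≤ ω (dist x y) * (1 + (1 + ω (dist x y)) * dist x y ^ n) *
        (1 + ω (dist x y)) ^ (q - 1) * dist x y ^ ((n : ℝ) * (q - 1)) :=
        le_mul_rpow_of_doublePhase_le hd (by linarith [hωnn _ hd.le])
          (h x hx y hy hay _ (inv_pos.2 hdn) (inv_mul_cancel₀ hdn.ne').le)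
    _ ≤ ε * dist x y ^ ((n : ℝ) * (q - 1)) := by
        gcongr
        exact (le_abs_self _).trans hprefactor.le

/-- the restricted (VA1)-type inequality for the double-phase function implies
strong Hölder continuity of the weight on the set where it vanishes. -/
theorem statement17 {n : ℕ} (Ω : Set (Eucl n)) (hΩo : IsOpen Ω)
    (hΩb : Bornology.IsBounded Ω)
    (q : ℝ) (hq : 1 < q) (a : Eucl n → ℝ) (ha0 : ∀ x, 0 ≤ a x)
    (ω : ℝ → ℝ) (hω : IsModulus ω)
    (h : ∀ x ∈ Ω, ∀ y ∈ Ω, a y = 0 → ∀ t : ℝ, 0 < t → t * dist x y ^ n ≤ 1 →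
      t / (1 + ω (dist x y)) + a x * (t / (1 + ω (dist x y))) ^ q ≤ t + ω (dist x y)) :
    ∀ ε : ℝ, 0 < ε → ∃ r : ℝ, 0 < r ∧ ∀ x ∈ Ω, ∀ y ∈ Ω, a y = 0 →
      0 < dist x y → dist x y < r → a x ≤ ε * dist x y ^ ((n : ℝ) * (q - 1)) :=
  statement17_general Ω q a ω hω h

end
end

section
/- Let Ω ⊆ ℝⁿ be a bounded open set with Lipschitz boundary and φ a continuous convex Φ-function, and let f ∈ L²(Ω) and λ > 0. Then the functional ROF_φ(v) = λ·E_φ(v) + (1/2)·∫_Ω |v − f|² dx has a unique minimiser u over L²(Ω); moreover, u ∈ L²(Ω) is the minimiser if and only if f − u ∈ λ·∂E_φ(u), i.e. E_φ(u) < ∞ and λ·E_φ(v) ≥ λ·E_φ(u) + ∫_Ω (f − u)·(v − u) dx for all v ∈ L²(Ω). -/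
open MeasureTheory Set Filter Topology
open scoped ENNReal NNReal

noncomputable section

/-!
On `L²(Ω)` the functional `E_φ` is a supremum of continuous affine functionals
`v ↦ ∫ v div ξ − ∫ φ*(x, |ξ|)`, hence convex, lower semicontinuous and finite at `0`.
Adding `½‖v − f‖²` makes `λ E_φ + ½‖· − f‖²` strongly midpoint convex (by the
parallelogram law), so minimising sequences are Cauchy, their limit is a minimiser by lower
semicontinuity, and two minimisers coincide. The variational inequality is the first-order
condition along the segments `(1 − t) u + t v`, `t ↓ 0`; conversely it gives
`ROF(v) − ROF(u) ≥ ½‖v − u‖²`.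
-/

section StrongMidpointConvex

variable {X : Type*} [NormedAddCommGroup X] [NormedSpace ℝ X]

def StrongMidpointConvex (c : ℝ) (J : X → ℝ≥0∞) : Prop :=
  ∀ u v, 2 * J (midpoint ℝ u v) + ENNReal.ofReal (c * ‖u - v‖ ^ 2) ≤ J u + J v

variable {c : ℝ} {J : X → ℝ≥0∞}

lemma StrongMidpointConvex.two_mul_add_le (hJ : StrongMidpointConvex c J) {m : ℝ≥0∞}
    (hm : ∀ w, m ≤ J w) (u v : X) :
    2 * m + ENNReal.ofReal (c * ‖u - v‖ ^ 2) ≤ J u + J v :=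
  le_trans (by gcongr; exact hm _) (hJ u v)

lemma StrongMidpointConvex.eq_of_forall_le (hc : 0 < c) (hJ : StrongMidpointConvex c J)
    {u u' : X} (hu : ∀ v, J u ≤ J v) (hu' : ∀ v, J u' ≤ J v) (hfin : J u ≠ ⊤) :
    u = u' := by
  have hle : 2 * J u + ENNReal.ofReal (c * ‖u - u'‖ ^ 2) ≤ 2 * J u + 0 := by
    calc _ ≤ J u + J u' := hJ.two_mul_add_le hu u u'
      _ = 2 * J u + 0 := by rw [le_antisymm (hu' u) (hu u'), two_mul, add_zero]
  have h := ENNReal.le_of_add_le_add_left (ENNReal.mul_ne_top ENNReal.ofNat_ne_top hfin) hle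
  rw [nonpos_iff_eq_zero, ENNReal.ofReal_eq_zero] at h
  have := le_antisymm (nonpos_of_mul_nonpos_right h hc) (sq_nonneg _)
  exact sub_eq_zero.mp (norm_eq_zero.mp (pow_eq_zero_iff two_ne_zero |>.mp this))

lemma StrongMidpointConvex.exists_forall_le [CompleteSpace X] (hc : 0 < c)
    (hJ : StrongMidpointConvex c J) (hlsc : LowerSemicontinuous J) (hfin : ∃ x, J x ≠ ⊤) :
    ∃ u, ∀ v, J u ≤ J v := by
  set m := ⨅ v, J v
  have hm : ∀ w, m ≤ J w := iInf_le J
  obtain ⟨w₀, hw₀⟩ := hfin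
  have hm_top : m ≠ ⊤ := ne_top_of_le_ne_top hw₀ (hm w₀)
  obtain ⟨a, -, ha, haJ⟩ := exists_seq_tendsto_sInf (range_nonempty J) (OrderBot.bddBelow _)
  choose x hx using haJ
  rw [← iInf, ← funext hx] at ha
  have hcauchy : CauchySeq x := by
    refine Metric.cauchySeq_iff'.2 fun ε hε => ?_
    set δ := ENNReal.ofReal (c * ε ^ 2 / 2)
    have hδ : m < m + δ := ENNReal.lt_add_right hm_top (by positivity)
    obtain ⟨N, hN⟩ := eventually_atTop.1 (ha.eventually (gt_mem_nhds hδ))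
    refine ⟨N, fun k hk => ?_⟩
    have h2δ : 2 * m + ENNReal.ofReal (c * ‖x k - x N‖ ^ 2)
        < 2 * m + ENNReal.ofReal (c * ε ^ 2) :=
      calc _ ≤ J (x k) + J (x N) := hJ.two_mul_add_le hm _ _
        _ < (m + δ) + (m + δ) := ENNReal.add_lt_add (hN k hk) (hN N le_rfl)
        _ = 2 * m + ENNReal.ofReal (c * ε ^ 2) := by
          rw [← two_mul, mul_add, ← ENNReal.ofReal_ofNat 2, ← ENNReal.ofReal_mul zero_le_two]
          ring_nf
    have := (ENNReal.add_lt_add_iff_left (ENNReal.mul_ne_top ENNReal.ofNat_ne_top hm_top)).1 h2δ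
    rw [ENNReal.ofReal_lt_ofReal_iff (by positivity)] at this
    rw [dist_eq_norm]
    exact lt_of_pow_lt_pow_left₀ 2 hε.le (lt_of_mul_lt_mul_left this hc.le)
  obtain ⟨u, hu⟩ := cauchySeq_tendsto_of_complete hcauchy
  refine ⟨u, fun v => le_trans ?_ (hm v)⟩
  refine le_of_forall_lt_imp_le_of_dense fun y hy => ?_
  exact ge_of_tendsto ha ((hu.eventually (hlsc u y hy)).mono fun _ h => h.le)

end StrongMidpointConvex

section ConvexOn

variable {X : Type*} [AddCommGroup X] [Module ℝ X] {E : X → ℝ≥0∞}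

lemma ConvexOn.two_mul_midpoint_le (hE : ConvexOn ℝ≥0 univ E) (u v : X) :
    2 * E (midpoint ℝ u v) ≤ E u + E v := by
  have h := hE.2 (mem_univ u) (mem_univ v) (zero_le : (0 : ℝ≥0) ≤ 2⁻¹)
    (zero_le : (0 : ℝ≥0) ≤ 2⁻¹) (by norm_num)
  rw [midpoint_eq_smul_add, smul_add]
  calc 2 * E ((⅟2 : ℝ) • u + (⅟2 : ℝ) • v)
      ≤ 2 * ((2⁻¹ : ℝ≥0) • E u + (2⁻¹ : ℝ≥0) • E v) := by
        gcongr; convert h using 3 <;> simp [NNReal.smul_def]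
    _ = E u + E v := by
        simp only [ENNReal.smul_def, smul_eq_mul, mul_add, ← mul_assoc]
        norm_num [ENNReal.mul_inv_cancel]

lemma ConvexOn.toReal_le (hE : ConvexOn ℝ≥0 univ E) {u v : X} (hu : E u ≠ ⊤)
    (hv : E v ≠ ⊤) {t : ℝ} (h0 : 0 ≤ t) (h1 : t ≤ 1) :
    E ((1 - t) • u + t • v) ≠ ⊤ ∧
      (E ((1 - t) • u + t • v)).toReal ≤ (1 - t) * (E u).toReal + t * (E v).toReal := by
  have hsum : (1 - t).toNNReal + t.toNNReal = 1 := by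
    rw [← Real.toNNReal_add (sub_nonneg.2 h1) h0, sub_add_cancel, Real.toNNReal_one]
  have h := hE.2 (mem_univ u) (mem_univ v) zero_le zero_le hsum
  simp only [NNReal.smul_def, Real.coe_toNNReal _ h0, Real.coe_toNNReal _ (sub_nonneg.2 h1),
    ENNReal.smul_def, smul_eq_mul] at h
  have hfin : ((1 - t).toNNReal : ℝ≥0∞) * E u + t.toNNReal * E v ≠ ⊤ := by finiteness
  refine ⟨ne_top_of_le_ne_top hfin h, (ENNReal.toReal_mono hfin h).trans_eq ?_⟩
  rw [ENNReal.toReal_add (by finiteness) (by finiteness), ENNReal.toReal_mul, ENNReal.toReal_mul]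
  simp [h0, h1]

end ConvexOn

section ProxObjective

variable {H : Type*} [NormedAddCommGroup H] {E : H → ℝ≥0∞}

def proxObjective (E : H → ℝ≥0∞) (lam : ℝ) (f v : H) : ℝ≥0∞ :=
  ENNReal.ofReal lam * E v + ENNReal.ofReal (‖v - f‖ ^ 2 / 2)

variable {lam : ℝ} {f : H}

lemma proxObjective_eq_top (hlam : 0 < lam) {v : H} (hv : E v = ⊤) :
    proxObjective E lam f v = ⊤ := by
  simp [proxObjective, hv, hlam]

lemma proxObjective_ne_top {v : H} (hv : E v ≠ ⊤) : proxObjective E lam f v ≠ ⊤ := by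
  unfold proxObjective; finiteness

lemma proxObjective_eq_ofReal (hlam : 0 ≤ lam) {v : H} (hv : E v ≠ ⊤) :
    proxObjective E lam f v = ENNReal.ofReal (lam * (E v).toReal + ‖v - f‖ ^ 2 / 2) := by
  rw [proxObjective, ENNReal.ofReal_add (by positivity) (by positivity),
    ENNReal.ofReal_mul hlam, ENNReal.ofReal_toReal hv]

lemma lowerSemicontinuous_proxObjective (hE : LowerSemicontinuous E) (lam : ℝ) (f : H) :
    LowerSemicontinuous (proxObjective E lam f) :=
  ((ENNReal.continuous_const_mul ENNReal.ofReal_ne_top).comp_lowerSemicontinuous hE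
    fun _ _ h => by gcongr).add
    (ENNReal.continuous_ofReal.comp (by fun_prop)).lowerSemicontinuous

variable [InnerProductSpace ℝ H]

lemma strongMidpointConvex_proxObjective (hE : ConvexOn ℝ≥0 univ E) (lam : ℝ) (f : H) :
    StrongMidpointConvex 4⁻¹ (proxObjective E lam f) := by
  intro u v
  have hquad : 2 * ENNReal.ofReal (‖midpoint ℝ u v - f‖ ^ 2 / 2)
      + ENNReal.ofReal (4⁻¹ * ‖u - v‖ ^ 2)
      = ENNReal.ofReal (‖u - f‖ ^ 2 / 2) + ENNReal.ofReal (‖v - f‖ ^ 2 / 2) := by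
    have h :=
      EuclideanGeometry.dist_sq_add_dist_sq_eq_two_mul_dist_midpoint_sq_add_half_dist_sq f u v
    simp only [dist_comm f, dist_eq_norm] at h
    rw [← ENNReal.ofReal_ofNat 2, ← ENNReal.ofReal_mul zero_le_two,
      ← ENNReal.ofReal_add (by positivity) (by positivity),
      ← ENNReal.ofReal_add (by positivity) (by positivity)]
    congr 1
    linarith
  calc 2 * proxObjective E lam f (midpoint ℝ u v) + ENNReal.ofReal (4⁻¹ * ‖u - v‖ ^ 2)
      = ENNReal.ofReal lam * (2 * E (midpoint ℝ u v))
        + (2 * ENNReal.ofReal (‖midpoint ℝ u v - f‖ ^ 2 / 2)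
          + ENNReal.ofReal (4⁻¹ * ‖u - v‖ ^ 2)) := by
        rw [proxObjective]; ring
    _ ≤ ENNReal.ofReal lam * (E u + E v)
        + (ENNReal.ofReal (‖u - f‖ ^ 2 / 2) + ENNReal.ofReal (‖v - f‖ ^ 2 / 2)) := by
        rw [hquad]; gcongr; exact hE.two_mul_midpoint_le u v
    _ = proxObjective E lam f u + proxObjective E lam f v := by
        simp only [proxObjective]; ring

lemma exists_forall_proxObjective_le [CompleteSpace H] (hE : ConvexOn ℝ≥0 univ E)
    (hlsc : LowerSemicontinuous E) (hfin : ∃ x, E x ≠ ⊤) (lam : ℝ) (f : H) :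
    ∃ u, ∀ v, proxObjective E lam f u ≤ proxObjective E lam f v :=
  (strongMidpointConvex_proxObjective hE lam f).exists_forall_le (by norm_num)
    (lowerSemicontinuous_proxObjective hlsc lam f) (hfin.imp fun _ => proxObjective_ne_top)

lemma eq_of_forall_proxObjective_le (hE : ConvexOn ℝ≥0 univ E) (hfin : ∃ x, E x ≠ ⊤)
    {u u' : H} (hu : ∀ v, proxObjective E lam f u ≤ proxObjective E lam f v)
    (hu' : ∀ v, proxObjective E lam f u' ≤ proxObjective E lam f v) : u = u' := by
  obtain ⟨x, hx⟩ := hfin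
  exact (strongMidpointConvex_proxObjective hE lam f).eq_of_forall_le (by norm_num) hu hu'
    (ne_top_of_le_ne_top (proxObjective_ne_top hx) (hu x))

lemma norm_sub_smul_add_smul_sq (f u v : H) (t : ℝ) :
    ‖(1 - t) • u + t • v - f‖ ^ 2
      = ‖u - f‖ ^ 2 - 2 * t * inner ℝ (f - u) (v - u) + t ^ 2 * ‖v - u‖ ^ 2 := by
  have : (1 - t) • u + t • v - f = (u - f) + t • (v - u) := by module
  rw [this, norm_add_sq_real, norm_smul, inner_smul_right, mul_pow, Real.norm_eq_abs, sq_abs,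
    ← neg_sub f u, inner_neg_left]
  ring

lemma forall_proxObjective_le_iff (hE : ConvexOn ℝ≥0 univ E) (hlam : 0 < lam)
    (hfin : ∃ x, E x ≠ ⊤) (u : H) :
    (∀ v, proxObjective E lam f u ≤ proxObjective E lam f v) ↔
      E u < ⊤ ∧ ∀ v, E v < ⊤ →
        lam * (E u).toReal + inner ℝ (f - u) (v - u) ≤ lam * (E v).toReal := by
  constructor
  · intro hmin
    have hu : E u ≠ ⊤ := by
      obtain ⟨x, hx⟩ := hfin
      intro hu
      have := hmin x
      rw [proxObjective_eq_top hlam hu, top_le_iff] at this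
      exact proxObjective_ne_top hx this
    refine ⟨hu.lt_top, fun v hv => ?_⟩
    have hslope : ∀ t : ℝ, 0 < t → t ≤ 1 →
        lam * (E u).toReal + inner ℝ (f - u) (v - u) - lam * (E v).toReal
          ≤ t * (‖v - u‖ ^ 2 / 2) := by
      intro t ht0 ht1
      obtain ⟨hw, hwle⟩ := hE.toReal_le hu hv.ne ht0.le ht1
      have h := hmin ((1 - t) • u + t • v)
      rw [proxObjective_eq_ofReal hlam.le hu, proxObjective_eq_ofReal hlam.le hw,
        ENNReal.ofReal_le_ofReal_iff (by positivity), norm_sub_smul_add_smul_sq] at h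
      have := mul_le_mul_of_nonneg_left hwle hlam.le
      refine le_of_mul_le_mul_left ?_ ht0
      nlinarith
    have hlim : Tendsto (fun t : ℝ => t * (‖v - u‖ ^ 2 / 2)) (𝓝[>] 0) (𝓝 0) := by
      simpa using ((tendsto_id (x := 𝓝 (0 : ℝ))).mul_const (‖v - u‖ ^ 2 / 2)).mono_left
        nhdsWithin_le_nhds
    have := ge_of_tendsto hlim (eventually_of_mem (Ioc_mem_nhdsGT one_pos)
      fun t ht => hslope t ht.1 ht.2)
    linarith
  · rintro ⟨hu, hEL⟩ v
    rcases eq_or_ne (E v) ⊤ with hv | hv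
    · rw [proxObjective_eq_top hlam hv]; exact le_top
    rw [proxObjective_eq_ofReal hlam.le hu.ne, proxObjective_eq_ofReal hlam.le hv]
    apply ENNReal.ofReal_le_ofReal
    have := norm_sub_smul_add_smul_sq f u v 1
    simp only [sub_self, zero_smul, one_smul, zero_add, one_pow, one_mul, mul_one] at this
    nlinarith [hEL v hv.lt_top, sq_nonneg ‖v - u‖]

end ProxObjective

section AffineSup

variable {H : Type*} [NormedAddCommGroup H] [InnerProductSpace ℝ H] {ι : Sort*}

lemma convexOn_iSup_ofReal_inner_sub (g : ι → H) (c : ι → ℝ≥0∞) :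
    ConvexOn ℝ≥0 univ fun w => ⨆ i, ENNReal.ofReal (inner ℝ w (g i)) - c i := by
  refine ⟨convex_univ, fun w _ w' _ a b _ _ hab => iSup_le fun i => tsub_le_iff_right.2 ?_⟩
  set S := fun w => ⨆ i, ENNReal.ofReal (inner ℝ w (g i)) - c i
  have hS : ∀ w, ENNReal.ofReal (inner ℝ w (g i)) - c i ≤ S w := fun w =>
    le_iSup (fun i => ENNReal.ofReal (inner ℝ w (g i)) - c i) i
  simp only [NNReal.smul_def, ENNReal.smul_def, smul_eq_mul, inner_add_left,
    real_inner_smul_left]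
  calc ENNReal.ofReal (a * inner ℝ w (g i) + b * inner ℝ w' (g i))
      ≤ a * ENNReal.ofReal (inner ℝ w (g i)) + b * ENNReal.ofReal (inner ℝ w' (g i)) := by
        refine ENNReal.ofReal_add_le.trans ?_
        rw [ENNReal.ofReal_mul a.coe_nonneg, ENNReal.ofReal_mul b.coe_nonneg,
          ENNReal.ofReal_coe_nnreal, ENNReal.ofReal_coe_nnreal]
    _ ≤ a * ((ENNReal.ofReal (inner ℝ w (g i)) - c i) + c i)
        + b * ((ENNReal.ofReal (inner ℝ w' (g i)) - c i) + c i) := by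
        gcongr <;> exact le_tsub_add
    _ = a * (ENNReal.ofReal (inner ℝ w (g i)) - c i)
        + b * (ENNReal.ofReal (inner ℝ w' (g i)) - c i)
        + ((a + b : ℝ≥0) : ℝ≥0∞) * c i := by
        push_cast; ring
    _ ≤ a * S w + b * S w' + c i := by
        rw [hab, ENNReal.coe_one, one_mul]; gcongr <;> exact hS _

lemma lowerSemicontinuous_iSup_ofReal_inner_sub (g : ι → H) (c : ι → ℝ≥0∞) :
    LowerSemicontinuous fun w => ⨆ i, ENNReal.ofReal (inner ℝ w (g i)) - c i :=
  lowerSemicontinuous_iSup fun _ => ((ENNReal.continuous_sub_right _).comp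
    (ENNReal.continuous_ofReal.comp (continuous_id.inner continuous_const))).lowerSemicontinuous

end AffineSup

lemma integral_mul_eq_inner_toLp {α : Type*} [MeasurableSpace α] {μ : Measure α}
    {a b : α → ℝ} (ha : MemLp a 2 μ) (hb : MemLp b 2 μ) :
    ∫ x, a x * b x ∂μ = inner ℝ (ha.toLp a) (hb.toLp b) := by
  rw [L2.inner_def]
  refine integral_congr_ae ?_
  filter_upwards [ha.coeFn_toLp, hb.coeFn_toLp] with x hax hbx
  rw [hax, hbx, Real.inner_apply, mul_comm]

lemma lintegral_ofReal_sq_eq {α : Type*} [MeasurableSpace α] {μ : Measure α} {a : α → ℝ}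
    (ha : MemLp a 2 μ) :
    ∫⁻ x, ENNReal.ofReal (a x ^ 2) ∂μ = ENNReal.ofReal (‖ha.toLp a‖ ^ 2) := by
  rw [← ofReal_integral_eq_lintegral_ofReal ha.integrable_sq (ae_of_all _ fun x => sq_nonneg _),
    ← real_inner_self_eq_norm_sq, ← integral_mul_eq_inner_toLp]
  simp_rw [sq]

lemma forall_Lp_iff_forall_memLp {α E : Type*} [MeasurableSpace α] [NormedAddCommGroup E]
    {p : ℝ≥0∞} {μ : Measure α} {P : Lp E p μ → Prop} :
    (∀ W, P W) ↔ ∀ v (hv : MemLp v p μ), P (hv.toLp v) :=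
  ⟨fun h v hv => h _, fun h W => by simpa only [Lp.toLp_coeFn] using h W (Lp.memLp W)⟩

section TVphi

variable {n : ℕ} {Ω : Set (Eucl n)} {φ : Eucl n → ℝ → ℝ}

lemma continuous_divg {ξ : Eucl n → Eucl n} (hξ : ContDiff ℝ 1 ξ) : Continuous (divg ξ) :=
  continuous_finsetSum _ fun i _ => (EuclideanSpace.proj i).continuous.comp
    ((ContinuousLinearMap.apply ℝ (Eucl n) (EuclideanSpace.single i 1)).continuous.comp
      (hξ.continuous_fderiv one_ne_zero))

lemma support_divg_subset_tsupport (ξ : Eucl n → Eucl n) :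
    Function.support (divg ξ) ⊆ tsupport ξ := by
  intro x hx
  by_contra hxt
  apply hx
  simp [divg, (notMem_tsupport_iff_eventuallyEq.mp hxt).fderiv_eq]

lemma memLp_divg {ξ : Eucl n → Eucl n} (hξ : TestVF Ω ξ) :
    MemLp (divg ξ) 2 (volume.restrict Ω) :=
  ((continuous_divg hξ.1).memLp_of_hasCompactSupport
    (hξ.2.1.mono' (support_divg_subset_tsupport ξ))).restrict Ω

lemma TVphi_congr_ae {u v : Eucl n → ℝ} (h : u =ᵐ[volume.restrict Ω] v) :
    TVphi Ω φ u = TVphi Ω φ v := by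
  refine iSup_congr fun ξ => ?_
  congr 2
  refine integral_congr_ae ?_
  filter_upwards [h] with x hx
  rw [hx]

variable (Ω φ) in
def Ephi (W : Lp ℝ 2 (volume.restrict Ω)) : ℝ≥0∞ :=
  TVphi Ω φ W

lemma Ephi_toLp {v : Eucl n → ℝ} (hv : MemLp v 2 (volume.restrict Ω)) :
    Ephi Ω φ (hv.toLp v) = TVphi Ω φ v :=
  TVphi_congr_ae hv.coeFn_toLp

lemma Ephi_eq_iSup (W : Lp ℝ 2 (volume.restrict Ω)) :
    Ephi Ω φ W = ⨆ ξ : {ξ : Eucl n → Eucl n // TestVF Ω ξ},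
      ENNReal.ofReal (inner ℝ W ((memLp_divg ξ.2).toLp _)) - ∫⁻ x in Ω, phiStar φ x ‖ξ.1 x‖ :=
  iSup_congr fun ξ => by
    rw [integral_mul_eq_inner_toLp (Lp.memLp W) (memLp_divg ξ.2), Lp.toLp_coeFn]

lemma convexOn_Ephi : ConvexOn ℝ≥0 univ (Ephi Ω φ) := by
  simp_rw [funext Ephi_eq_iSup]
  exact convexOn_iSup_ofReal_inner_sub _ _

lemma lowerSemicontinuous_Ephi : LowerSemicontinuous (Ephi Ω φ) := by
  simp_rw [funext Ephi_eq_iSup]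
  exact lowerSemicontinuous_iSup_ofReal_inner_sub _ _

lemma Ephi_zero : Ephi Ω φ 0 = 0 := by
  simp [Ephi_eq_iSup]

end TVphi

section ROF

variable {n : ℕ} {Ω : Set (Eucl n)} {φ : Eucl n → ℝ → ℝ} {f : Eucl n → ℝ}

lemma ROFfun_eq_proxObjective (hf : MemLp f 2 (volume.restrict Ω)) (lam : ℝ)
    {v : Eucl n → ℝ} (hv : MemLp v 2 (volume.restrict Ω)) :
    ROFfun Ω φ lam f v = proxObjective (Ephi Ω φ) lam (hf.toLp f) (hv.toLp v) := by
  rw [ROFfun, proxObjective, Ephi_toLp, ← MemLp.toLp_sub hv hf,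
    ENNReal.ofReal_div_of_pos two_pos, ENNReal.ofReal_ofNat, ← lintegral_ofReal_sq_eq (hv.sub hf)]
  rfl

lemma forall_ROFfun_le_iff (hf : MemLp f 2 (volume.restrict Ω)) (lam : ℝ) {u : Eucl n → ℝ}
    (hu : MemLp u 2 (volume.restrict Ω)) :
    (∀ v, MemLp v 2 (volume.restrict Ω) → ROFfun Ω φ lam f u ≤ ROFfun Ω φ lam f v) ↔
      ∀ W, proxObjective (Ephi Ω φ) lam (hf.toLp f) (hu.toLp u)
        ≤ proxObjective (Ephi Ω φ) lam (hf.toLp f) W := by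
  rw [forall_Lp_iff_forall_memLp]
  exact forall₂_congr fun v hv => by
    rw [ROFfun_eq_proxObjective hf lam hu, ROFfun_eq_proxObjective hf lam hv]

lemma integral_sub_mul_sub_eq_inner {u v : Eucl n → ℝ} (hf : MemLp f 2 (volume.restrict Ω))
    (hu : MemLp u 2 (volume.restrict Ω)) (hv : MemLp v 2 (volume.restrict Ω)) :
    ∫ x in Ω, (f x - u x) * (v x - u x) =
      inner ℝ (hf.toLp f - hu.toLp u) (hv.toLp v - hu.toLp u) := by
  rw [← MemLp.toLp_sub, ← MemLp.toLp_sub, ← integral_mul_eq_inner_toLp]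
  rfl

end ROF

theorem statement19_general {n : ℕ} (Ω : Set (Eucl n))
    (φ : Eucl n → ℝ → ℝ)
    (f : Eucl n → ℝ) (hf : MemLp f 2 (volume.restrict Ω)) (lam : ℝ) (hlam : 0 < lam) :
    ∃ u : Eucl n → ℝ, MemLp u 2 (volume.restrict Ω) ∧
      (∀ v, MemLp v 2 (volume.restrict Ω) → ROFfun Ω φ lam f u ≤ ROFfun Ω φ lam f v) ∧
      (∀ u', MemLp u' 2 (volume.restrict Ω) →
        (∀ v, MemLp v 2 (volume.restrict Ω) →
          ROFfun Ω φ lam f u' ≤ ROFfun Ω φ lam f v) →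
        u' =ᵐ[volume.restrict Ω] u) ∧
      (∀ u', MemLp u' 2 (volume.restrict Ω) →
        ((∀ v, MemLp v 2 (volume.restrict Ω) →
            ROFfun Ω φ lam f u' ≤ ROFfun Ω φ lam f v) ↔
          (TVphi Ω φ u' < ⊤ ∧ ∀ v, MemLp v 2 (volume.restrict Ω) → TVphi Ω φ v < ⊤ →
            lam * (TVphi Ω φ u').toReal + ∫ x in Ω, (f x - u' x) * (v x - u' x) ≤
              lam * (TVphi Ω φ v).toReal))) := by
  have hfin : ∃ W, Ephi Ω φ W ≠ ⊤ := ⟨0, by simp [Ephi_zero]⟩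
  obtain ⟨U, hU⟩ :=
    exists_forall_proxObjective_le convexOn_Ephi lowerSemicontinuous_Ephi hfin lam (hf.toLp f)
  have hUU : (Lp.memLp U).toLp U = U := Lp.toLp_coeFn U _
  refine ⟨U, Lp.memLp U, (forall_ROFfun_le_iff hf lam _).2 (hUU ▸ hU),
    fun u' hu' hu'min => ?_, fun u' hu' => ?_⟩
  · rw [← hu'.toLp_eq_toLp_iff (Lp.memLp U), hUU]
    exact eq_of_forall_proxObjective_le convexOn_Ephi hfin
      ((forall_ROFfun_le_iff hf lam hu').1 hu'min) hU
  · rw [forall_ROFfun_le_iff hf lam hu', forall_proxObjective_le_iff convexOn_Ephi hlam hfin,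
      forall_Lp_iff_forall_memLp]
    simp only [Ephi_toLp, ← integral_sub_mul_sub_eq_inner hf hu']

/-- existence and (a.e.) uniqueness of the minimiser of the ROF_φ functional,
and the Euler–Lagrange characterisation via the subdifferential of E_φ. -/
theorem statement19 {n : ℕ} (hn : 1 ≤ n) (Ω : Set (Eucl n)) (hΩo : IsOpen Ω)
    (hΩb : Bornology.IsBounded Ω) (hΩl : HasLipschitzBoundary n Ω)
    (φ : Eucl n → ℝ → ℝ) (hφ : IsPhiFunction Ω φ)
    (f : Eucl n → ℝ) (hf : MemLp f 2 (volume.restrict Ω)) (lam : ℝ) (hlam : 0 < lam) :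
    ∃ u : Eucl n → ℝ, MemLp u 2 (volume.restrict Ω) ∧
      (∀ v, MemLp v 2 (volume.restrict Ω) → ROFfun Ω φ lam f u ≤ ROFfun Ω φ lam f v) ∧
      (∀ u', MemLp u' 2 (volume.restrict Ω) →
        (∀ v, MemLp v 2 (volume.restrict Ω) →
          ROFfun Ω φ lam f u' ≤ ROFfun Ω φ lam f v) →
        u' =ᵐ[volume.restrict Ω] u) ∧
      (∀ u', MemLp u' 2 (volume.restrict Ω) →
        ((∀ v, MemLp v 2 (volume.restrict Ω) →
            ROFfun Ω φ lam f u' ≤ ROFfun Ω φ lam f v) ↔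
          (TVphi Ω φ u' < ⊤ ∧ ∀ v, MemLp v 2 (volume.restrict Ω) → TVphi Ω φ v < ⊤ →
            lam * (TVphi Ω φ u').toReal + ∫ x in Ω, (f x - u' x) * (v x - u' x) ≤
              lam * (TVphi Ω φ v).toReal))) :=
  statement19_general Ω φ f hf lam hlam

end
end
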